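/- arXiv:1711.03223 — 8 statements merged into one kernel-verified Lean document; each statement's English description precedes it below -/
import Mathlib

section
/- For every admissible trading intensity β, the Riccati equation S'_t = (σᵛ_t)² + 2 f_t S_t − (β_t S_t/σᶻ_t)², S_0 = s₀, has a unique C¹ solution S = S^β defined on all of [0,T); moreover S_t > 0 for every t ∈ [0,T), and S_t ≤ s₀ + C_β t for all t ∈ [0,T), where C_β := sup_{t∈[0,T]} ( f_t² (σᶻ_t)² / β̲² + (σᵛ_t)² ). -/
open MeasureTheory Filter Set intervalIntegral

noncomputable section

/-- An admissible trading intensity: continuous and positive on `[0,T)`, with a limit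
at `T⁻` that is either a positive real or `+∞`. -/
def Admissible (T : ℝ) (β : ℝ → ℝ) : Prop :=
  ContinuousOn β (Set.Ico 0 T) ∧ (∀ t ∈ Set.Ico 0 T, 0 < β t) ∧
    ((∃ l : ℝ, 0 < l ∧ Filter.Tendsto β (nhdsWithin T (Set.Ico 0 T)) (nhds l)) ∨
      Filter.Tendsto β (nhdsWithin T (Set.Ico 0 T)) Filter.atTop)

/-- `S` is a C¹ solution on `[0,T)` of the Riccati equation
`S' = (σᵛ)² + 2 f S − (β S/σᶻ)²`, `S 0 = s₀`. -/
def RiccatiSol (T s₀ : ℝ) (f σv σz β S : ℝ → ℝ) : Prop :=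
  S 0 = s₀ ∧ ∀ t ∈ Set.Ico 0 T,
    HasDerivWithinAt S ((σv t) ^ 2 + 2 * f t * S t - (β t * S t / σz t) ^ 2)
      (Set.Ico 0 T) t

namespace RiccatiAux

/-- beta lower bound lemma (admissibility): -/
lemma beta_lb (T : ℝ) (hT : 0 < T) (β : ℝ → ℝ) (hβ : Admissible T β) :
    ∃ m : ℝ, 0 < m ∧ ∀ t ∈ Set.Ico 0 T, m ≤ β t := by
  obtain ⟨hβc, hβpos, hβlim⟩ := hβ
  have hev : ∃ a : ℝ, 0 < a ∧ ∀ᶠ t in nhdsWithin T (Set.Ico 0 T), a < β t := by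
    rcases hβlim with ⟨l, hl, hlim⟩ | hlim
    · exact ⟨l / 2, half_pos hl, hlim.eventually (eventually_gt_nhds (half_lt_self hl))⟩
    · exact ⟨1, one_pos, hlim.eventually (eventually_gt_atTop 1)⟩
  obtain ⟨a, ha, hev⟩ := hev
  rw [eventually_nhdsWithin_iff] at hev
  rw [Metric.eventually_nhds_iff] at hev
  obtain ⟨ε, hε, hball⟩ := hev
  set b₀ : ℝ := max 0 (T - ε / 2) with hb₀
  have hb₀0 : 0 ≤ b₀ := le_max_left _ _
  have hb₀T : b₀ < T := by
    rw [hb₀]; apply max_lt hT; linarith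
  have hsub : Set.Icc 0 b₀ ⊆ Set.Ico 0 T := fun u hu => ⟨hu.1, lt_of_le_of_lt hu.2 hb₀T⟩
  obtain ⟨t₀, ht₀, hmin⟩ := isCompact_Icc.exists_isMinOn (Set.nonempty_Icc.2 hb₀0)
    (hβc.mono hsub)
  have hm1 : 0 < β t₀ := hβpos t₀ (hsub ht₀)
  refine ⟨min (β t₀) a, lt_min hm1 ha, fun t ht => ?_⟩
  rcases le_or_gt t b₀ with h | h
  · exact le_trans (min_le_left _ _) (hmin ⟨ht.1, h⟩)
  · refine le_trans (min_le_right _ _) (le_of_lt (hball ?_ ht))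
    have : T - ε / 2 ≤ b₀ := le_max_right _ _
    rw [Real.dist_eq, abs_sub_lt_iff]
    constructor <;> [linarith [ht.2]; linarith]

def rF (f σv σz β : ℝ → ℝ) (t x : ℝ) : ℝ :=
  (σv t) ^ 2 + 2 * f t * x - (β t * x / σz t) ^ 2

lemma rF_sub (f σv σz β : ℝ → ℝ) (t x y : ℝ) :
    rF f σv σz β t x - rF f σv σz β t y
      = (2 * f t - (β t / σz t) ^ 2 * (x + y)) * (x - y) := by
  simp only [rF]; ring

lemma rF_lipschitz_bound (f σv σz β : ℝ → ℝ) (t x y A Q P : ℝ)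
    (hA : |f t| ≤ A) (hQ : (β t / σz t) ^ 2 ≤ Q) (hQ0 : 0 ≤ Q)
    (hx : |x| ≤ P) (hy : |y| ≤ P) :
    |rF f σv σz β t x - rF f σv σz β t y| ≤ (2 * A + 2 * Q * P) * |x - y| := by
  rw [rF_sub, abs_mul]
  apply mul_le_mul_of_nonneg_right _ (abs_nonneg _)
  calc |2 * f t - (β t / σz t) ^ 2 * (x + y)|
      ≤ |2 * f t| + |(β t / σz t) ^ 2 * (x + y)| := abs_sub _ _
    _ = 2 * |f t| + (β t / σz t) ^ 2 * |x + y| := by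
        rw [abs_mul, abs_mul, abs_two, abs_of_nonneg (sq_nonneg (β t / σz t))]
    _ ≤ 2 * A + Q * (2 * P) := by
        have h1 : |x + y| ≤ 2 * P := by
          calc |x + y| ≤ |x| + |y| := abs_add_le _ _
            _ ≤ 2 * P := by linarith
        have h2 : (β t / σz t) ^ 2 * |x + y| ≤ Q * (2 * P) :=
          mul_le_mul hQ h1 (abs_nonneg _) hQ0
        linarith [abs_nonneg (f t), hA]
    _ = 2 * A + 2 * Q * P := by ring


lemma coef_bounds (T b c : ℝ) (hb : 0 ≤ b) (hbT : b < T) (hc : 0 < c)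
    (f σv σz β : ℝ → ℝ)
    (hf : ContinuousOn f (Set.Icc 0 T)) (hσv : ContinuousOn σv (Set.Icc 0 T))
    (hσz : ContinuousOn σz (Set.Icc 0 T)) (hβc : ContinuousOn β (Set.Ico 0 T))
    (hσzc : ∀ t ∈ Set.Icc 0 T, c ≤ σz t) :
    ∃ A Q V : ℝ, 0 ≤ A ∧ 0 ≤ Q ∧ 0 ≤ V ∧
      (∀ t ∈ Set.Icc 0 b, |f t| ≤ A) ∧
      (∀ t ∈ Set.Icc 0 b, (β t / σz t) ^ 2 ≤ Q) ∧
      (∀ t ∈ Set.Icc 0 b, |σv t| ≤ V) := by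
  have hsub : Set.Icc 0 b ⊆ Set.Icc 0 T := Set.Icc_subset_Icc le_rfl hbT.le
  have hsub' : Set.Icc 0 b ⊆ Set.Ico 0 T := fun u hu => ⟨hu.1, lt_of_le_of_lt hu.2 hbT⟩
  obtain ⟨A, hA⟩ := isCompact_Icc.exists_bound_of_continuousOn (hf.mono hsub)
  obtain ⟨B, hB⟩ := isCompact_Icc.exists_bound_of_continuousOn (hβc.mono hsub')
  obtain ⟨V, hV⟩ := isCompact_Icc.exists_bound_of_continuousOn (hσv.mono hsub)
  have h0b : (0:ℝ) ∈ Set.Icc 0 b := ⟨le_rfl, hb⟩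
  have hA0 : 0 ≤ A := le_trans (norm_nonneg _) (hA 0 h0b)
  have hB0 : 0 ≤ B := le_trans (norm_nonneg _) (hB 0 h0b)
  have hV0 : 0 ≤ V := le_trans (norm_nonneg _) (hV 0 h0b)
  refine ⟨A, (B / c) ^ 2, V, hA0, by positivity, hV0, fun t ht => hA t ht, fun t ht => ?_,
    fun t ht => hV t ht⟩
  have hσzt : c ≤ σz t := hσzc t (hsub ht)
  have h1 : |β t / σz t| ≤ B / c := by
    rw [abs_div]
    apply div_le_div₀ (by positivity) (hB t ht) hc
    rw [abs_of_pos (lt_of_lt_of_le hc hσzt)]; exact hσzt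
  calc (β t / σz t) ^ 2 = |β t / σz t| ^ 2 := (sq_abs _).symm
    _ ≤ (B / c) ^ 2 := by apply pow_le_pow_left₀ (abs_nonneg _) h1

lemma uniq_on (T b c : ℝ) (hb : 0 ≤ b) (hbT : b < T) (hc : 0 < c)
    (f σv σz β : ℝ → ℝ)
    (hf : ContinuousOn f (Set.Icc 0 T)) (hσv : ContinuousOn σv (Set.Icc 0 T))
    (hσz : ContinuousOn σz (Set.Icc 0 T)) (hβc : ContinuousOn β (Set.Ico 0 T))
    (hσzc : ∀ t ∈ Set.Icc 0 T, c ≤ σz t)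
    (S₁ S₂ : ℝ → ℝ)
    (h₁c : ContinuousOn S₁ (Set.Icc 0 b))
    (h₁d : ∀ t ∈ Set.Ico 0 b, HasDerivWithinAt S₁ (rF f σv σz β t (S₁ t)) (Set.Ici t) t)
    (h₂c : ContinuousOn S₂ (Set.Icc 0 b))
    (h₂d : ∀ t ∈ Set.Ico 0 b, HasDerivWithinAt S₂ (rF f σv σz β t (S₂ t)) (Set.Ici t) t)
    (h0 : S₁ 0 = S₂ 0) :
    Set.EqOn S₁ S₂ (Set.Icc 0 b) := by
  obtain ⟨A, Q, V, hA0, hQ0, hV0, hA, hQ, hV⟩ :=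
    coef_bounds T b c hb hbT hc f σv σz β hf hσv hσz hβc hσzc
  obtain ⟨P₁, hP₁⟩ := isCompact_Icc.exists_bound_of_continuousOn h₁c
  obtain ⟨P₂, hP₂⟩ := isCompact_Icc.exists_bound_of_continuousOn h₂c
  set P := max P₁ P₂ with hP
  have hP1 : ∀ t ∈ Set.Icc 0 b, |S₁ t| ≤ P := fun t ht => le_trans (hP₁ t ht) (le_max_left _ _)
  have hP2 : ∀ t ∈ Set.Icc 0 b, |S₂ t| ≤ P := fun t ht => le_trans (hP₂ t ht) (le_max_right _ _)
  have hP0 : 0 ≤ P := le_trans (abs_nonneg _) (hP1 0 ⟨le_rfl, hb⟩)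
  set τ : ℝ → ℝ := fun t => min (max t 0) b with hτdef
  have hτ : ∀ t ∈ Set.Icc 0 b, τ t = t := fun t ht => by
    simp only [hτdef]; rw [max_eq_left ht.1, min_eq_left ht.2]
  have hτmem : ∀ t : ℝ, τ t ∈ Set.Icc 0 b :=
    fun t => ⟨le_min (le_max_right _ _) hb, min_le_right _ _⟩
  set K : NNReal := Real.toNNReal (2 * A + 2 * Q * P) with hK
  have hv : ∀ t : ℝ, LipschitzOnWith K (fun x => rF f σv σz β (τ t) x)
      (Metric.closedBall (0:ℝ) P) := by
    intro t
    rw [lipschitzOnWith_iff_dist_le_mul]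
    intro x hx y hy
    rw [Real.dist_eq, Real.dist_eq]
    have hcoe : (K : ℝ) = 2 * A + 2 * Q * P := Real.coe_toNNReal _ (by positivity)
    rw [hcoe]
    simp only [Metric.mem_closedBall, Real.dist_eq, sub_zero] at hx hy
    exact rF_lipschitz_bound f σv σz β (τ t) x y A Q P (hA _ (hτmem t)) (hQ _ (hτmem t)) hQ0 hx hy
  intro t ht
  exact ODE_solution_unique_of_mem_Icc_right (v := fun t x => rF f σv σz β (τ t) x)
    (s := fun _ => Metric.closedBall (0:ℝ) P) (fun t _ => hv t) h₁c
    (fun u hu => by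
      show HasDerivWithinAt S₁ (rF f σv σz β (τ u) (S₁ u)) (Set.Ici u) u
      rw [hτ u (Set.Ico_subset_Icc_self hu)]; exact h₁d u hu)
    (fun u hu => by
      simp only [Metric.mem_closedBall, Real.dist_eq, sub_zero]
      exact hP1 u (Set.Ico_subset_Icc_self hu)) h₂c
    (fun u hu => by
      show HasDerivWithinAt S₂ (rF f σv σz β (τ u) (S₂ u)) (Set.Ici u) u
      rw [hτ u (Set.Ico_subset_Icc_self hu)]; exact h₂d u hu)
    (fun u hu => by
      simp only [Metric.mem_closedBall, Real.dist_eq, sub_zero]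
      exact hP2 u (Set.Ico_subset_Icc_self hu)) h0 ht

set_option maxHeartbeats 1000000 in
lemma exists_on (T b c s₀ Cβ : ℝ) (hb : 0 < b) (hbT : b < T) (hc : 0 < c) (hs₀ : 0 < s₀)
    (hCβ : 0 < Cβ)
    (f σv σz β : ℝ → ℝ)
    (hf : ContinuousOn f (Set.Icc 0 T)) (hσv : ContinuousOn σv (Set.Icc 0 T))
    (hσz : ContinuousOn σz (Set.Icc 0 T)) (hβc : ContinuousOn β (Set.Ico 0 T))
    (hσvc : ∀ t ∈ Set.Icc 0 T, c ≤ σv t)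
    (hσzc : ∀ t ∈ Set.Icc 0 T, c ≤ σz t)
    (hFle : ∀ t ∈ Set.Ico 0 T, ∀ x : ℝ, rF f σv σz β t x ≤ Cβ) :
    ∃ S : ℝ → ℝ, S 0 = s₀ ∧ ContinuousOn S (Set.Icc 0 b) ∧
      (∀ t ∈ Set.Icc 0 b, HasDerivWithinAt S (rF f σv σz β t (S t)) (Set.Icc 0 b) t) ∧
      (∃ m : ℝ, 0 < m ∧ ∀ t ∈ Set.Icc 0 b, m ≤ S t) ∧
      (∀ t ∈ Set.Icc 0 b, S t ≤ s₀ + Cβ * t) := by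
  obtain ⟨A, Q, V, hA0, hQ0, hV0, hA, hQ, hV⟩ :=
    coef_bounds T b c hb.le hbT hc f σv σz β hf hσv hσz hβc hσzc
  have hsub : Set.Icc 0 b ⊆ Set.Icc 0 T := Set.Icc_subset_Icc le_rfl hbT.le
  have hsub' : Set.Icc 0 b ⊆ Set.Ico 0 T := fun u hu => ⟨hu.1, lt_of_le_of_lt hu.2 hbT⟩
  obtain ⟨M, hMdef⟩ : ∃ M : ℝ, M = s₀ + Cβ * b + 1 := ⟨_, rfl⟩
  have hM0 : 0 < M := by rw [hMdef]; nlinarith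
  have hs₀M : s₀ < M := by rw [hMdef]; nlinarith
  obtain ⟨π, hπdef⟩ : ∃ π : ℝ → ℝ, π = fun x => max 0 (min x M) := ⟨_, rfl⟩
  have hπmem : ∀ x : ℝ, π x ∈ Set.Icc 0 M := by
    rw [hπdef]
    exact fun x => ⟨le_max_left _ _, max_le hM0.le (min_le_right _ _)⟩
  have hπid : ∀ x ∈ Set.Icc 0 M, π x = x := fun x hx => by
    simp only [hπdef]; rw [min_eq_left hx.2, max_eq_right hx.1]
  have hπlip : ∀ x y : ℝ, |π x - π y| ≤ |x - y| := by
    rw [hπdef]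
    intro x y
    simp only
    have h1 : |max 0 (min x M) - max 0 (min y M)| ≤ |min x M - min y M| := by
      rw [max_comm 0 (min x M), max_comm 0 (min y M)]
      exact abs_max_sub_max_le_abs _ _ _
    have h2 : |min x M - min y M| ≤ max |x - y| |M - M| := abs_min_sub_min_le_max _ _ _ _
    rw [sub_self, abs_zero] at h2
    exact le_trans h1 (le_trans h2 (max_le le_rfl (abs_nonneg _)))
  obtain ⟨G, hGdef⟩ : ∃ G : ℝ → ℝ → ℝ, G = fun t x => rF f σv σz β t (π x) := ⟨_, rfl⟩
  obtain ⟨C₀, hC₀⟩ : ∃ C₀ : ℝ, C₀ = V ^ 2 + 2 * A * M + Q * M ^ 2 := ⟨_, rfl⟩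
  have hC₀0 : 0 ≤ C₀ := by rw [hC₀]; positivity
  have hGbd : ∀ t ∈ Set.Icc 0 b, ∀ x : ℝ, |G t x| ≤ C₀ := by
    intro t ht x
    obtain ⟨hy0, hyM⟩ := hπmem x
    have h1 : σv t ^ 2 ≤ V ^ 2 := by
      rw [← sq_abs (σv t)]; exact pow_le_pow_left₀ (abs_nonneg _) (hV t ht) 2
    have h2 : |f t * π x| ≤ A * M := by
      rw [abs_mul, abs_of_nonneg hy0]
      exact mul_le_mul (hA t ht) hyM hy0 hA0
    obtain ⟨h2a, h2b⟩ := abs_le.mp h2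
    have h3 : (β t * π x / σz t) ^ 2 ≤ Q * M ^ 2 := by
      have he : (β t * π x / σz t) ^ 2 = (β t / σz t) ^ 2 * (π x) ^ 2 := by ring
      rw [he]
      exact mul_le_mul (hQ t ht) (pow_le_pow_left₀ hy0 hyM 2) (sq_nonneg _) hQ0
    have h4 : (0:ℝ) ≤ (β t * π x / σz t) ^ 2 := sq_nonneg _
    have h5 : (0:ℝ) ≤ σv t ^ 2 := sq_nonneg _
    rw [abs_le]
    constructor
    · simp only [hGdef, rF]; rw [hC₀]; nlinarith
    · simp only [hGdef, rF]; rw [hC₀]; nlinarith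
  obtain ⟨K, hK⟩ : ∃ K : NNReal, K = Real.toNNReal (2 * A + 2 * Q * M) := ⟨_, rfl⟩
  have hGlip : ∀ t ∈ Set.Icc 0 b, LipschitzOnWith K (G t) (Metric.closedBall s₀ (C₀ * b)) := by
    intro t ht
    rw [lipschitzOnWith_iff_dist_le_mul]
    intro x _ y _
    rw [Real.dist_eq, Real.dist_eq]
    have hcoe : (K : ℝ) = 2 * A + 2 * Q * M := by
      rw [hK]; exact Real.coe_toNNReal _ (by positivity)
    rw [hcoe]
    have h1 : |G t x - G t y| ≤ (2 * A + 2 * Q * M) * |π x - π y| := by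
      simp only [hGdef]
      exact rF_lipschitz_bound f σv σz β t (π x) (π y) A Q M (hA t ht) (hQ t ht) hQ0
        (by rw [abs_of_nonneg (hπmem x).1]; exact (hπmem x).2)
        (by rw [abs_of_nonneg (hπmem y).1]; exact (hπmem y).2)
    exact le_trans h1 (mul_le_mul_of_nonneg_left (hπlip x y) (by positivity))
  have hPL : IsPicardLindelof (fun t x => G t x) (tmin := 0) (tmax := b) ⟨0, le_rfl, hb.le⟩ s₀
      ⟨C₀ * b, by positivity⟩ 0 ⟨C₀, hC₀0⟩ K := by
    refine ⟨fun t ht => hGlip t ht, ?_, ?_, ?_⟩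
    · intro x _
      have hfc : ContinuousOn f (Set.Icc 0 b) := hf.mono hsub
      have hvc : ContinuousOn σv (Set.Icc 0 b) := hσv.mono hsub
      have hzc : ContinuousOn σz (Set.Icc 0 b) := hσz.mono hsub
      have hbc : ContinuousOn β (Set.Icc 0 b) := hβc.mono hsub'
      have hzne : ∀ t ∈ Set.Icc 0 b, σz t ≠ 0 :=
        fun t ht => ne_of_gt (lt_of_lt_of_le hc (hσzc t (hsub ht)))
      simp only [hGdef, rF]
      exact ((hvc.pow 2).add ((continuousOn_const.mul hfc).mul continuousOn_const)).sub
        (((hbc.mul continuousOn_const).div hzc hzne).pow 2)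
    · intro t ht x _
      rw [Real.norm_eq_abs]; exact hGbd t ht x
    · have hmax : max (b - 0) (0 - 0) = b := by
        rw [sub_zero, sub_self]; exact max_eq_left hb.le
      show C₀ * max (b - 0) (0 - 0) ≤ C₀ * b - ((0 : NNReal) : ℝ)
      rw [hmax, NNReal.coe_zero, sub_zero]
  obtain ⟨S, hS0, hSd⟩ := IsPicardLindelof.exists_eq_forall_mem_Icc_hasDerivWithinAt₀ hPL
  replace hS0 : S 0 = s₀ := hS0
  have hScont : ContinuousOn S (Set.Icc 0 b) := fun t ht => (hSd t ht).continuousWithinAt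
  have hIci : ∀ t ∈ Set.Ico 0 b, HasDerivWithinAt S (G t (S t)) (Set.Ici t) t := by
    intro t ht
    refine (hSd t (Set.Ico_subset_Icc_self ht)).mono_of_mem_nhdsWithin ?_
    rw [mem_nhdsWithin]
    exact ⟨Set.Iio b, isOpen_Iio, ht.2, fun u hu => ⟨le_trans ht.1 hu.2, le_of_lt hu.1⟩⟩
  have hGle : ∀ t ∈ Set.Icc 0 b, ∀ x : ℝ, G t x ≤ Cβ := by
    intro t ht x
    simp only [hGdef]
    exact hFle t (hsub' ht) (π x)
  have hupper : ∀ t ∈ Set.Icc 0 b, S t ≤ s₀ + Cβ * t := by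
    have H := le_gronwallBound_of_liminf_deriv_right_le (f := S)
      (f' := fun t => G t (S t)) (δ := s₀) (K := 0) (ε := Cβ) (a := 0) (b := b)
      hScont
      (fun x hx r hr => (hIci x hx).liminf_right_slope_le hr)
      (le_of_eq hS0)
      (fun x hx => by
        rw [zero_mul, zero_add]; exact hGle x (Set.Ico_subset_Icc_self hx) (S x))
    intro t ht
    have h := H t ht
    simp only [gronwallBound_K0, sub_zero] at h
    exact h
  -- the lower barrier
  obtain ⟨K₂, hK₂⟩ : ∃ K₂ : ℝ, K₂ = 2 * A + Q * M + 1 := ⟨_, rfl⟩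
  have hK₂0 : 0 < K₂ := by rw [hK₂]; positivity
  obtain ⟨m, hm⟩ : ∃ m : ℝ, m = min s₀ (c ^ 2 / (2 * K₂)) := ⟨_, rfl⟩
  have hm0 : 0 < m := by rw [hm]; exact lt_min hs₀ (by positivity)
  have hms₀ : m ≤ s₀ := by rw [hm]; exact min_le_left _ _
  have hmM : m ≤ M := le_trans hms₀ hs₀M.le
  have hGpos : ∀ t ∈ Set.Icc 0 b, ∀ x : ℝ, x ≤ m → c ^ 2 / 2 ≤ G t x := by
    intro t ht x hx
    obtain ⟨hy0, hyM⟩ := hπmem x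
    have hym : π x ≤ m := by
      simp only [hπdef]
      refine max_le hm0.le (le_trans (min_le_min_right M hx) ?_)
      rw [min_eq_left hmM]
    have h1 : c ^ 2 ≤ σv t ^ 2 := pow_le_pow_left₀ hc.le (hσvc t (hsub ht)) 2
    have h2 : |f t * π x| ≤ A * m := by
      rw [abs_mul, abs_of_nonneg hy0]
      exact mul_le_mul (hA t ht) hym hy0 hA0
    obtain ⟨h2a, h2b⟩ := abs_le.mp h2
    have h3 : (β t * π x / σz t) ^ 2 ≤ Q * (M * m) := by
      have he : (β t * π x / σz t) ^ 2 = (β t / σz t) ^ 2 * (π x) ^ 2 := by ring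
      rw [he]
      have : (π x) ^ 2 ≤ M * m := by nlinarith
      exact mul_le_mul (hQ t ht) this (sq_nonneg _) hQ0
    have h4 : K₂ * m ≤ c ^ 2 / 2 := by
      have hm' : m ≤ c ^ 2 / (2 * K₂) := by rw [hm]; exact min_le_right _ _
      have h5 : m * (2 * K₂) ≤ c ^ 2 := by
        rw [← le_div_iff₀ (by positivity)]; exact hm'
      linarith
    have hK₂m : K₂ * m = 2 * A * m + Q * M * m + m := by rw [hK₂]; ring
    simp only [hGdef, rF]
    nlinarith [h1, h2a, h3, h4, hK₂m, hm0, hym, hy0, hA0, hQ0]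
  have hlower : ∀ t ∈ Set.Icc 0 b, m ≤ S t := by
    by_contra hcon
    push_neg at hcon
    obtain ⟨t₁, ht₁, hlt⟩ := hcon
    have hsubt : Set.Icc 0 t₁ ⊆ Set.Icc 0 b := Set.Icc_subset_Icc le_rfl ht₁.2
    obtain ⟨A', hA'⟩ : ∃ A' : Set ℝ, A' = Set.Icc 0 t₁ ∩ S ⁻¹' (Set.Ici m) := ⟨_, rfl⟩
    have h0A : (0:ℝ) ∈ A' := by
      rw [hA']
      exact ⟨⟨le_rfl, ht₁.1⟩, by simp only [Set.mem_preimage, Set.mem_Ici, hS0]; exact hms₀⟩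
    have hbdd : BddAbove A' := ⟨t₁, fun u hu => by rw [hA'] at hu; exact hu.1.2⟩
    have hclosed : IsClosed A' := by
      rw [hA']
      exact (hScont.mono hsubt).preimage_isClosed_of_isClosed isClosed_Icc isClosed_Ici
    have hτA : sSup A' ∈ A' := hclosed.csSup_mem ⟨0, h0A⟩ hbdd
    set τ := sSup A' with hτ
    have hτm : m ≤ S τ := by rw [hA'] at hτA; exact hτA.2
    have hττ : τ ∈ Set.Icc 0 t₁ := by rw [hA'] at hτA; exact hτA.1
    have hτt₁ : τ < t₁ := lt_of_le_of_ne hττ.2 (fun h => by rw [h] at hτm; linarith)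
    have hint : ∀ u ∈ Set.Ioo τ t₁, S u < m := by
      intro u hu
      by_contra hge
      push_neg at hge
      have : u ∈ A' := by rw [hA']; exact ⟨⟨le_trans hττ.1 hu.1.le, hu.2.le⟩, hge⟩
      exact absurd (le_csSup hbdd this) (not_le.mpr hu.1)
    have hmono : StrictMonoOn S (Set.Icc τ t₁) := by
      apply strictMonoOn_of_hasDerivWithinAt_pos (convex_Icc _ _)
        (hScont.mono (Set.Icc_subset_Icc hττ.1 ht₁.2)) (f' := fun x => G x (S x))
      · intro x hx
        rw [interior_Icc] at hx
        have hxb : x ∈ Set.Icc 0 b :=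
          ⟨le_trans hττ.1 hx.1.le, le_trans hx.2.le ht₁.2⟩
        rw [interior_Icc]
        exact (hSd x hxb).mono (fun u hu => ⟨le_trans hττ.1 hu.1.le, le_trans hu.2.le ht₁.2⟩)
      · intro x hx
        rw [interior_Icc] at hx
        have hxb : x ∈ Set.Icc 0 b :=
          ⟨le_trans hττ.1 hx.1.le, le_trans hx.2.le ht₁.2⟩
        have := hGpos x hxb (S x) (hint x hx).le
        exact lt_of_lt_of_le (by positivity) this
    have := hmono ⟨le_rfl, hτt₁.le⟩ ⟨hτt₁.le, le_rfl⟩ hτt₁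
    linarith
  have hSM : ∀ t ∈ Set.Icc 0 b, S t ∈ Set.Icc 0 M := by
    intro t ht
    refine ⟨le_trans hm0.le (hlower t ht), ?_⟩
    have h1 := hupper t ht
    have h2 : Cβ * t ≤ Cβ * b := mul_le_mul_of_nonneg_left ht.2 hCβ.le
    linarith [hMdef]
  refine ⟨S, hS0, hScont, ?_, ⟨m, hm0, hlower⟩, hupper⟩
  intro t ht
  have h := hSd t ht
  have he : G t (S t) = rF f σv σz β t (S t) := by
    simp only [hGdef]
    rw [hπid (S t) (hSM t ht)]
  rwa [he] at h

end RiccatiAux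

open RiccatiAux

set_option maxHeartbeats 1000000 in
/-- existence, uniqueness on `[0,T)`, positivity, and the linear growth
bound `S_t ≤ s₀ + C_β t` with `C_β = sup_{[0,T]} (f² (σᶻ)²/β̲² + (σᵛ)²)`. -/
theorem riccati_existence_uniqueness_positivity_bound
    (T s₀ c : ℝ) (hT : 0 < T) (hs₀ : 0 < s₀) (hc : 0 < c)
    (f g σv σz : ℝ → ℝ)
    (hf : ContinuousOn f (Set.Icc 0 T)) (hg : ContinuousOn g (Set.Icc 0 T))
    (hσv : ContinuousOn σv (Set.Icc 0 T)) (hσz : ContinuousOn σz (Set.Icc 0 T))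
    (hσvc : ∀ t ∈ Set.Icc 0 T, c ≤ σv t) (hσzc : ∀ t ∈ Set.Icc 0 T, c ≤ σz t)
    (β : ℝ → ℝ) (hβ : Admissible T β) :
    ∃ S : ℝ → ℝ, RiccatiSol T s₀ f σv σz β S ∧
      (∀ S' : ℝ → ℝ, RiccatiSol T s₀ f σv σz β S' → Set.EqOn S' S (Set.Ico 0 T)) ∧
      (∀ t ∈ Set.Ico 0 T, 0 < S t) ∧
      (∀ t ∈ Set.Ico 0 T, S t ≤ s₀ +
        sSup ((fun u => (f u) ^ 2 * (σz u) ^ 2 / (sInf (β '' Set.Ico 0 T)) ^ 2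
          + (σv u) ^ 2) '' Set.Icc 0 T) * t) := by
  obtain ⟨mβ, hmβ0, hβlb⟩ := beta_lb T hT β hβ
  have hβc := hβ.1
  have hβpos := hβ.2.1
  have hne : (β '' Set.Ico 0 T).Nonempty := ⟨β 0, Set.mem_image_of_mem _ ⟨le_rfl, hT⟩⟩
  have hbddβ : BddBelow (β '' Set.Ico 0 T) :=
    ⟨mβ, by rintro _ ⟨u, hu, rfl⟩; exact hβlb u hu⟩
  set βinf := sInf (β '' Set.Ico 0 T) with hβinf
  have hβinf_pos : 0 < βinf :=
    lt_of_lt_of_le hmβ0 (le_csInf hne (by rintro _ ⟨u, hu, rfl⟩; exact hβlb u hu))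
  have hβinf_le : ∀ t ∈ Set.Ico 0 T, βinf ≤ β t :=
    fun t ht => csInf_le hbddβ (Set.mem_image_of_mem _ ht)
  set gfun : ℝ → ℝ := fun u => f u ^ 2 * σz u ^ 2 / βinf ^ 2 + σv u ^ 2 with hgfun
  set Cβ := sSup (gfun '' Set.Icc 0 T) with hCβdef
  have hgcont : ContinuousOn gfun (Set.Icc 0 T) := by
    rw [hgfun]
    exact (((hf.pow 2).mul (hσz.pow 2)).div_const _).add (hσv.pow 2)
  have hCβ_ub : ∀ t ∈ Set.Icc 0 T, gfun t ≤ Cβ := fun t ht =>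
    le_csSup (isCompact_Icc.bddAbove_image hgcont) (Set.mem_image_of_mem _ ht)
  have hc2 : c ^ 2 ≤ gfun 0 := by
    have h1 : c ≤ σv 0 := hσvc 0 ⟨le_rfl, hT.le⟩
    have h2 : c ^ 2 ≤ σv 0 ^ 2 := pow_le_pow_left₀ hc.le h1 2
    have h3 : 0 ≤ f 0 ^ 2 * σz 0 ^ 2 / βinf ^ 2 := by positivity
    simp only [hgfun]
    linarith
  have hCβ_pos : 0 < Cβ :=
    lt_of_lt_of_le (by positivity) (le_trans hc2 (hCβ_ub 0 ⟨le_rfl, hT.le⟩))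
  have hFle : ∀ t ∈ Set.Ico 0 T, ∀ x : ℝ, rF f σv σz β t x ≤ Cβ := by
    intro t ht x
    have hβt := hβpos t ht
    have hσzt := hσzc t ⟨ht.1, ht.2.le⟩
    have hβne : β t ≠ 0 := ne_of_gt hβt
    have hσzne : σz t ≠ 0 := ne_of_gt (lt_of_lt_of_le hc hσzt)
    have key : (f t * σz t / β t - β t * x / σz t) ^ 2
        = f t ^ 2 * σz t ^ 2 / β t ^ 2 - 2 * f t * x + (β t * x / σz t) ^ 2 := by
      field_simp
      ring
    have h1 : 2 * f t * x - (β t * x / σz t) ^ 2 ≤ f t ^ 2 * σz t ^ 2 / β t ^ 2 := by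
      nlinarith [sq_nonneg (f t * σz t / β t - β t * x / σz t)]
    have h2 : f t ^ 2 * σz t ^ 2 / β t ^ 2 ≤ f t ^ 2 * σz t ^ 2 / βinf ^ 2 := by
      have hs : βinf ^ 2 ≤ β t ^ 2 := pow_le_pow_left₀ hβinf_pos.le (hβinf_le t ht) 2
      gcongr
    have h3 := hCβ_ub t ⟨ht.1, ht.2.le⟩
    simp only [hgfun] at h3
    simp only [rF]
    linarith
  -- per-b solutions via choice
  have hexb : ∀ b : {x : ℝ // x ∈ Set.Ioo 0 T}, ∃ S : ℝ → ℝ, S 0 = s₀ ∧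
      ContinuousOn S (Set.Icc 0 b.1) ∧
      (∀ t ∈ Set.Icc 0 b.1, HasDerivWithinAt S (rF f σv σz β t (S t)) (Set.Icc 0 b.1) t) ∧
      (∃ m : ℝ, 0 < m ∧ ∀ t ∈ Set.Icc 0 b.1, m ≤ S t) ∧
      (∀ t ∈ Set.Icc 0 b.1, S t ≤ s₀ + Cβ * t) := fun b =>
    exists_on T b.1 c s₀ Cβ b.2.1 b.2.2 hc hs₀ hCβ_pos f σv σz β hf hσv hσz hβc hσvc hσzc hFle
  choose sol hsol0 hsolc hsold hsolpos hsolub using hexb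
  -- Ici-derivative conversion
  have hIci : ∀ (b : ℝ) (S : ℝ → ℝ) (u : ℝ), u ∈ Set.Ico 0 b →
      (∀ v ∈ Set.Icc 0 b, HasDerivWithinAt S (rF f σv σz β v (S v)) (Set.Icc 0 b) v) →
      HasDerivWithinAt S (rF f σv σz β u (S u)) (Set.Ici u) u := by
    intro b S u hu hd
    refine (hd u (Set.Ico_subset_Icc_self hu)).mono_of_mem_nhdsWithin ?_
    rw [mem_nhdsWithin]
    exact ⟨Set.Iio b, isOpen_Iio, hu.2, fun v hv => ⟨le_trans hu.1 hv.2, hv.1.le⟩⟩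
  -- consistency of the family
  have hagree : ∀ (b₁ b₂ : {x : ℝ // x ∈ Set.Ioo 0 T}) (t : ℝ),
      t ∈ Set.Icc 0 b₁.1 → t ∈ Set.Icc 0 b₂.1 → sol b₁ t = sol b₂ t := by
    intro b₁ b₂ t h1 h2
    have hble : min b₁.1 b₂.1 < T := lt_of_le_of_lt (min_le_left _ _) b₁.2.2
    have hb0 : (0:ℝ) ≤ min b₁.1 b₂.1 := le_min b₁.2.1.le b₂.2.1.le
    have hsub1 : Set.Icc 0 (min b₁.1 b₂.1) ⊆ Set.Icc 0 b₁.1 :=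
      Set.Icc_subset_Icc le_rfl (min_le_left _ _)
    have hsub2 : Set.Icc 0 (min b₁.1 b₂.1) ⊆ Set.Icc 0 b₂.1 :=
      Set.Icc_subset_Icc le_rfl (min_le_right _ _)
    exact uniq_on T (min b₁.1 b₂.1) c hb0 hble hc f σv σz β hf hσv hσz hβc hσzc
      (sol b₁) (sol b₂) ((hsolc b₁).mono hsub1)
      (fun u hu => hIci b₁.1 (sol b₁) u ⟨hu.1, lt_of_lt_of_le hu.2 (min_le_left _ _)⟩ (hsold b₁))
      ((hsolc b₂).mono hsub2)
      (fun u hu => hIci b₂.1 (sol b₂) u ⟨hu.1, lt_of_lt_of_le hu.2 (min_le_right _ _)⟩ (hsold b₂))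
      ((hsol0 b₁).trans (hsol0 b₂).symm) ⟨h1.1, le_min h1.2 h2.2⟩
  have hmem : ∀ t ∈ Set.Ico 0 T, (t + T) / 2 ∈ Set.Ioo 0 T :=
    fun t ht => ⟨by linarith [ht.1], by linarith [ht.2]⟩
  set Sfin : ℝ → ℝ :=
    fun t => if h : t ∈ Set.Ico 0 T then sol ⟨(t + T) / 2, hmem t h⟩ t else s₀ with hSfin
  have hSfin_eq : ∀ (b : {x : ℝ // x ∈ Set.Ioo 0 T}) (t : ℝ), t ∈ Set.Icc 0 b.1 →
      Sfin t = sol b t := by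
    intro b t ht
    have htm : t ∈ Set.Ico 0 T := ⟨ht.1, lt_of_le_of_lt ht.2 b.2.2⟩
    simp only [hSfin]
    rw [dif_pos htm]
    exact hagree ⟨(t + T) / 2, hmem t htm⟩ b t ⟨ht.1, by linarith [htm.2]⟩ ht
  refine ⟨Sfin, ⟨?_, ?_⟩, ?_, ?_, ?_⟩
  · -- initial condition
    have h0T : (0:ℝ) ∈ Set.Ico 0 T := ⟨le_rfl, hT⟩
    simp only [hSfin]
    rw [dif_pos h0T]
    exact hsol0 _
  · -- the ODE on [0, T)
    intro t ht
    have hb : (t + T) / 2 ∈ Set.Ioo 0 T := hmem t ht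
    set b : {x : ℝ // x ∈ Set.Ioo 0 T} := ⟨(t + T) / 2, hb⟩ with hbdef
    have htb : t ∈ Set.Icc 0 b.1 := ⟨ht.1, by show t ≤ (t + T) / 2; linarith [ht.2]⟩
    have hd := hsold b t htb
    have hd2 : HasDerivWithinAt Sfin (rF f σv σz β t (sol b t)) (Set.Icc 0 b.1) t :=
      hd.congr (fun u hu => hSfin_eq b u hu) (hSfin_eq b t htb)
    have hd3 : HasDerivWithinAt Sfin (rF f σv σz β t (sol b t)) (Set.Ico 0 T) t := by
      refine hd2.mono_of_mem_nhdsWithin ?_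
      rw [mem_nhdsWithin]
      refine ⟨Set.Iio b.1, isOpen_Iio, ?_, fun u hu => ⟨hu.2.1, hu.1.le⟩⟩
      show t < (t + T) / 2
      linarith [ht.2]
    rw [← hSfin_eq b t htb] at hd3
    simpa only [rF] using hd3
  · -- uniqueness
    intro S' hS' t ht
    have hb : (t + T) / 2 ∈ Set.Ioo 0 T := hmem t ht
    set b : {x : ℝ // x ∈ Set.Ioo 0 T} := ⟨(t + T) / 2, hb⟩ with hbdef
    have htb : t ∈ Set.Icc 0 b.1 := ⟨ht.1, by show t ≤ (t + T) / 2; linarith [ht.2]⟩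
    have hsubb : Set.Icc 0 b.1 ⊆ Set.Ico 0 T :=
      fun v hv => ⟨hv.1, lt_of_le_of_lt hv.2 b.2.2⟩
    have hS'c : ContinuousOn S' (Set.Icc 0 b.1) := fun u hu =>
      ((hS'.2 u (hsubb hu)).continuousWithinAt).mono hsubb
    have hS'd : ∀ u ∈ Set.Ico 0 b.1,
        HasDerivWithinAt S' (rF f σv σz β u (S' u)) (Set.Ici u) u := by
      intro u hu
      have humem : u ∈ Set.Ico 0 T := ⟨hu.1, lt_of_lt_of_le hu.2 b.2.2.le⟩
      have hD : HasDerivWithinAt S' (rF f σv σz β u (S' u)) (Set.Ico 0 T) u := by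
        simpa only [rF] using hS'.2 u humem
      refine hD.mono_of_mem_nhdsWithin ?_
      rw [mem_nhdsWithin]
      exact ⟨Set.Iio T, isOpen_Iio, humem.2, fun v hv => ⟨le_trans hu.1 hv.2, hv.1⟩⟩
    have heq := uniq_on T b.1 c (le_of_lt b.2.1) b.2.2 hc f σv σz β hf hσv hσz hβc hσzc
      S' (sol b) hS'c hS'd (hsolc b)
      (fun u hu => hIci b.1 (sol b) u hu (hsold b))
      (hS'.1.trans (hsol0 b).symm) htb
    rw [hSfin_eq b t htb]
    exact heq
  · -- positivity
    intro t ht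
    have hb : (t + T) / 2 ∈ Set.Ioo 0 T := hmem t ht
    set b : {x : ℝ // x ∈ Set.Ioo 0 T} := ⟨(t + T) / 2, hb⟩ with hbdef
    have htb : t ∈ Set.Icc 0 b.1 := ⟨ht.1, by show t ≤ (t + T) / 2; linarith [ht.2]⟩
    obtain ⟨m, hm0, hmle⟩ := hsolpos b
    have := hmle t htb
    rw [hSfin_eq b t htb]
    linarith
  · -- growth bound
    intro t ht
    have hb : (t + T) / 2 ∈ Set.Ioo 0 T := hmem t ht
    set b : {x : ℝ // x ∈ Set.Ioo 0 T} := ⟨(t + T) / 2, hb⟩ with hbdef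
    have htb : t ∈ Set.Icc 0 b.1 := ⟨ht.1, by show t ≤ (t + T) / 2; linarith [ht.2]⟩
    rw [hSfin_eq b t htb]
    exact hsolub b t htb
end
end

section
/- For every admissible trading intensity β, the solution S = S^β of the Riccati equation satisfies the uniform bound S_t ≤ e^{KT} (s₀ + KT) for all t ∈ [0,T), where K := (sup_{t∈[0,T]} |σᵛ_t|)² + 2 sup_{t∈[0,T]} |f_t|; in particular the bound does not depend on β. -/
open MeasureTheory Filter Set intervalIntegral

noncomputable section

/-- Positivity of the Riccati solution. -/
lemma riccati_pos
    (T s₀ c : ℝ) (hT : 0 < T) (hs₀ : 0 < s₀) (hc : 0 < c)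
    (f σv σz : ℝ → ℝ)
    (hσvc : ∀ t ∈ Set.Icc 0 T, c ≤ σv t)
    (β : ℝ → ℝ)
    (S : ℝ → ℝ) (hS : RiccatiSol T s₀ f σv σz β S) :
    ∀ t ∈ Set.Ico 0 T, 0 < S t := by
  have hScont : ContinuousOn S (Set.Ico 0 T) :=
    fun u hu => (hS.2 u hu).continuousWithinAt
  by_contra h
  push_neg at h
  obtain ⟨t, ht, hSt⟩ := h
  set Z : Set ℝ := Set.Icc 0 t ∩ S ⁻¹' Set.Iic 0 with hZdef
  have hsub : Set.Icc 0 t ⊆ Set.Ico 0 T := fun u hu => ⟨hu.1, lt_of_le_of_lt hu.2 ht.2⟩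
  have hZclosed : IsClosed Z :=
    (hScont.mono hsub).preimage_isClosed_of_isClosed isClosed_Icc isClosed_Iic
  have hZne : Z.Nonempty := ⟨t, ⟨ht.1, le_rfl⟩, hSt⟩
  have hZbdd : BddBelow Z := ⟨0, fun u hu => hu.1.1⟩
  set t₀ := sInf Z with ht₀def
  have ht₀Z : t₀ ∈ Z := hZclosed.csInf_mem hZne hZbdd
  have hS0 : S 0 = s₀ := hS.1
  have ht₀pos : 0 < t₀ := by
    rcases ht₀Z.1.1.lt_or_eq with h | h
    · exact h
    · exfalso
      have h2 : S t₀ ≤ 0 := ht₀Z.2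
      rw [← h, hS0] at h2
      linarith
  have hlt : ∀ u, 0 ≤ u → u < t₀ → 0 < S u := by
    intro u hu0 hut
    by_contra hSu
    push_neg at hSu
    have : u ∈ Z := ⟨⟨hu0, hut.le.trans ht₀Z.1.2⟩, hSu⟩
    exact absurd (csInf_le hZbdd this) (not_le.mpr hut)
  have ht₀mem : t₀ ∈ Set.Ico 0 T := ⟨ht₀Z.1.1, lt_of_le_of_lt ht₀Z.1.2 ht.2⟩
  have hne : (nhdsWithin t₀ (Set.Ioo 0 t₀)).NeBot := right_nhdsWithin_Ioo_neBot ht₀pos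
  have hIoo_sub : Set.Ioo 0 t₀ ⊆ Set.Ico 0 T :=
    fun u hu => ⟨hu.1.le, hu.2.trans ht₀mem.2⟩
  have hSt₀ge : 0 ≤ S t₀ := by
    have htend : Filter.Tendsto S (nhdsWithin t₀ (Set.Ioo 0 t₀)) (nhds (S t₀)) :=
      ((hScont t₀ ht₀mem).tendsto).mono_left (nhdsWithin_mono _ hIoo_sub)
    exact ge_of_tendsto htend
      (Filter.eventually_of_mem self_mem_nhdsWithin fun u hu => (hlt u hu.1.le hu.2).le)
  have hSt₀ : S t₀ = 0 := le_antisymm ht₀Z.2 hSt₀ge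
  have hd := hS.2 t₀ ht₀mem
  have hval : (σv t₀) ^ 2 + 2 * f t₀ * S t₀ - (β t₀ * S t₀ / σz t₀) ^ 2 = (σv t₀) ^ 2 := by
    rw [hSt₀]; ring
  rw [hval] at hd
  have hdpos : 0 < (σv t₀) ^ 2 :=
    pow_pos (lt_of_lt_of_le hc (hσvc t₀ ⟨ht₀mem.1, ht₀mem.2.le⟩)) 2
  have hslope := hasDerivWithinAt_iff_tendsto_slope.1 hd
  have hsub2 : Set.Ioo 0 t₀ ⊆ Set.Ico 0 T \ {t₀} :=
    fun u hu => ⟨hIoo_sub hu, ne_of_lt hu.2⟩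
  have htend2 : Filter.Tendsto (slope S t₀) (nhdsWithin t₀ (Set.Ioo 0 t₀))
      (nhds ((σv t₀) ^ 2)) := hslope.mono_left (nhdsWithin_mono _ hsub2)
  have hev : ∀ᶠ u in nhdsWithin t₀ (Set.Ioo 0 t₀), 0 < slope S t₀ u :=
    htend2.eventually (eventually_gt_nhds hdpos)
  obtain ⟨u, huIoo, hupos⟩ :=
    ((Filter.eventually_of_mem self_mem_nhdsWithin fun u hu => hu).and hev).exists
  have h1 : 0 < S u := hlt u huIoo.1.le huIoo.2
  have h2 : u - t₀ < 0 := sub_neg.mpr huIoo.2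
  have hneg : slope S t₀ u < 0 := by
    rw [slope_def_field, hSt₀, sub_zero]
    exact div_neg_of_pos_of_neg h1 h2
  linarith

/-- the uniform bound `S_t ≤ e^{KT}(s₀ + KT)`,
`K = (sup |σᵛ|)² + 2 sup |f|`, independent of `β`. -/
theorem riccati_uniform_bound
    (T s₀ c : ℝ) (hT : 0 < T) (hs₀ : 0 < s₀) (hc : 0 < c)
    (f g σv σz : ℝ → ℝ)
    (hf : ContinuousOn f (Set.Icc 0 T)) (hg : ContinuousOn g (Set.Icc 0 T))
    (hσv : ContinuousOn σv (Set.Icc 0 T)) (hσz : ContinuousOn σz (Set.Icc 0 T))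
    (hσvc : ∀ t ∈ Set.Icc 0 T, c ≤ σv t) (hσzc : ∀ t ∈ Set.Icc 0 T, c ≤ σz t)
    (β : ℝ → ℝ) (hβ : Admissible T β)
    (S : ℝ → ℝ) (hS : RiccatiSol T s₀ f σv σz β S) :
    ∀ t ∈ Set.Ico 0 T, S t ≤
      Real.exp (((sSup ((fun u => |σv u|) '' Set.Icc 0 T)) ^ 2
          + 2 * sSup ((fun u => |f u|) '' Set.Icc 0 T)) * T) *
        (s₀ + ((sSup ((fun u => |σv u|) '' Set.Icc 0 T)) ^ 2
          + 2 * sSup ((fun u => |f u|) '' Set.Icc 0 T)) * T) := by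
  have hpos := riccati_pos T s₀ c hT hs₀ hc f σv σz hσvc β S hS
  have hScont : ContinuousOn S (Set.Ico 0 T) :=
    fun u hu => (hS.2 u hu).continuousWithinAt
  set M := sSup ((fun u => |σv u|) '' Set.Icc 0 T) with hMdef
  set F := sSup ((fun u => |f u|) '' Set.Icc 0 T) with hFdef
  set K := M ^ 2 + 2 * F with hKdef
  have hMb : BddAbove ((fun u => |σv u|) '' Set.Icc 0 T) :=
    (isCompact_Icc.image_of_continuousOn hσv.abs).bddAbove
  have hFb : BddAbove ((fun u => |f u|) '' Set.Icc 0 T) :=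
    (isCompact_Icc.image_of_continuousOn hf.abs).bddAbove
  have hM : ∀ u ∈ Set.Icc 0 T, |σv u| ≤ M := fun u hu => le_csSup hMb ⟨u, hu, rfl⟩
  have hF : ∀ u ∈ Set.Icc 0 T, |f u| ≤ F := fun u hu => le_csSup hFb ⟨u, hu, rfl⟩
  have h0T : (0 : ℝ) ∈ Set.Icc 0 T := ⟨le_rfl, hT.le⟩
  have hF0 : 0 ≤ F := le_trans (abs_nonneg _) (hF 0 h0T)
  have hM0 : 0 < M := lt_of_lt_of_le hc ((hσvc 0 h0T).trans ((le_abs_self _).trans (hM 0 h0T)))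
  have hK0 : 0 < K := by positivity
  have hKne : K ≠ 0 := ne_of_gt hK0
  intro t ht
  have hsub : Set.Icc 0 t ⊆ Set.Ico 0 T := fun u hu => ⟨hu.1, lt_of_le_of_lt hu.2 ht.2⟩
  set d : ℝ → ℝ := fun x => (σv x) ^ 2 + 2 * f x * S x - (β x * S x / σz x) ^ 2 with hddef
  have hgron := le_gronwallBound_of_liminf_deriv_right_le (f := S) (f' := d)
    (δ := s₀) (K := K) (ε := K) (a := 0) (b := t)
    (hScont.mono hsub)
    (by
      intro x hx r hr
      have hxT : x ∈ Set.Ico 0 T := ⟨hx.1, lt_of_lt_of_le hx.2 ht.2.le⟩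
      have hder : HasDerivWithinAt S (d x) (Set.Ici x) x :=
        (hS.2 x hxT).mono_of_mem_nhdsWithin (Ico_mem_nhdsGE_of_mem hxT)
      have := hder.liminf_right_slope_le hr
      refine this.mono fun z hz => ?_
      rwa [slope_def_field, div_eq_inv_mul] at hz)
    (le_of_eq hS.1)
    (by
      intro x hx
      have hxT : x ∈ Set.Ico 0 T := ⟨hx.1, lt_of_lt_of_le hx.2 ht.2.le⟩
      have hxIcc : x ∈ Set.Icc 0 T := ⟨hxT.1, hxT.2.le⟩
      have hSx : 0 < S x := hpos x hxT
      have h1 : (σv x) ^ 2 ≤ M ^ 2 := by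
        rw [← sq_abs (σv x)]
        exact pow_le_pow_left₀ (abs_nonneg _) (hM x hxIcc) 2
      have h2 : f x ≤ F := (le_abs_self _).trans (hF x hxIcc)
      have h3 : (0 : ℝ) ≤ (β x * S x / σz x) ^ 2 := sq_nonneg _
      have hM2 : 0 ≤ M ^ 2 := sq_nonneg _
      show d x ≤ K * S x + K
      have : 2 * f x * S x ≤ 2 * F * S x := by nlinarith
      simp only [hddef, hKdef]
      nlinarith)
  have hbound := hgron t ⟨ht.1, le_rfl⟩
  rw [sub_zero, gronwallBound_of_K_ne_0 hKne] at hbound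
  have hKtT : K * t ≤ K * T := mul_le_mul_of_nonneg_left ht.2.le hK0.le
  have hexp : Real.exp (K * t) ≤ Real.exp (K * T) := Real.exp_le_exp.mpr hKtT
  have h1 : -(K * T) + 1 ≤ Real.exp (-(K * T)) := Real.add_one_le_exp _
  have h2 : Real.exp (K * T) * Real.exp (-(K * T)) = 1 := by
    rw [← Real.exp_add]; simp
  have hexppos : 0 < Real.exp (K * T) := Real.exp_pos _
  have hexppos' : 0 < Real.exp (K * t) := Real.exp_pos _
  have hKT : 0 < K * T := mul_pos hK0 hT
  calc S t ≤ s₀ * Real.exp (K * t) + K / K * (Real.exp (K * t) - 1) := hbound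
    _ = s₀ * Real.exp (K * t) + (Real.exp (K * t) - 1) := by
        rw [div_self hKne, one_mul]
    _ ≤ Real.exp (K * T) * (s₀ + K * T) := by nlinarith
end
end

section
/- For every admissible trading intensity β, the solution S = S^β of the Riccati equation has a finite limit at the terminal time: lim_{t→T⁻} S_t exists and belongs to [0,∞), so S extends continuously to [0,T]. -/
open MeasureTheory Filter Set intervalIntegral

noncomputable section

/-- Auxiliary: a continuous function on a closed interval extends continuously to `ℝ`. -/
lemma riccati_aux_exists_ext {a b : ℝ} (hab : a ≤ b) {g : ℝ → ℝ}
    (hg : ContinuousOn g (Set.Icc a b)) :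
    ∃ G : ℝ → ℝ, Continuous G ∧ ∀ x ∈ Set.Icc a b, G x = g x := by
  refine ⟨Set.IccExtend hab ((Set.Icc a b).restrict g),
    (continuousOn_iff_continuous_restrict.mp hg).Icc_extend', fun x hx => ?_⟩
  rw [Set.IccExtend_of_mem hab _ hx]
  rfl

/-- `S` has a finite nonnegative limit at `T⁻`, hence extends
continuously to `[0,T]`. -/
theorem riccati_limit_exists
    (T s₀ c : ℝ) (hT : 0 < T) (hs₀ : 0 < s₀) (hc : 0 < c)
    (f g σv σz : ℝ → ℝ)
    (hf : ContinuousOn f (Set.Icc 0 T)) (hg : ContinuousOn g (Set.Icc 0 T))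
    (hσv : ContinuousOn σv (Set.Icc 0 T)) (hσz : ContinuousOn σz (Set.Icc 0 T))
    (hσvc : ∀ t ∈ Set.Icc 0 T, c ≤ σv t) (hσzc : ∀ t ∈ Set.Icc 0 T, c ≤ σz t)
    (β : ℝ → ℝ) (hβ : Admissible T β)
    (S : ℝ → ℝ) (hS : RiccatiSol T s₀ f σv σz β S)
    (hSpos : ∀ t ∈ Set.Ico 0 T, 0 < S t) :
    ∃ L : ℝ, 0 ≤ L ∧ Filter.Tendsto S (nhdsWithin T (Set.Ico 0 T)) (nhds L) ∧
      ∃ Sbar : ℝ → ℝ, ContinuousOn Sbar (Set.Icc 0 T) ∧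
        Set.EqOn Sbar S (Set.Ico 0 T) ∧ Sbar T = L := by
  obtain ⟨fe, hfec, hfe⟩ := riccati_aux_exists_ext hT.le hf
  obtain ⟨ve, hvec, hve⟩ := riccati_aux_exists_ext hT.le hσv
  -- F = ∫ 2 f, E = exp (-F), H = ∫ E σv²
  set F : ℝ → ℝ := fun t => ∫ x in (0:ℝ)..t, 2 * fe x with hFdef
  have hfe2 : Continuous fun x => 2 * fe x := continuous_const.mul hfec
  have hF : ∀ t : ℝ, HasDerivAt F (2 * fe t) t := fun t =>
    intervalIntegral.integral_hasDerivAt_right (hfe2.intervalIntegrable _ _)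
      (hfe2.stronglyMeasurableAtFilter _ _) hfe2.continuousAt
  have hFc : Continuous F := by
    rw [continuous_iff_continuousAt]; exact fun t => (hF t).continuousAt
  set E : ℝ → ℝ := fun t => Real.exp (-F t) with hEdef
  have hEpos : ∀ t, 0 < E t := fun t => Real.exp_pos _
  have hE : ∀ t : ℝ, HasDerivAt E (E t * -(2 * fe t)) t := fun t => ((hF t).neg).exp
  have hEc : Continuous E := (hFc.neg).rexp
  have hint : Continuous fun x => E x * ve x ^ 2 := hEc.mul (hvec.pow 2)
  set H : ℝ → ℝ := fun t => ∫ x in (0:ℝ)..t, E x * ve x ^ 2 with hHdef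
  have hH : ∀ t : ℝ, HasDerivAt H (E t * ve t ^ 2) t := fun t =>
    intervalIntegral.integral_hasDerivAt_right (hint.intervalIntegrable _ _)
      (hint.stronglyMeasurableAtFilter _ _) hint.continuousAt
  have hHc : Continuous H := by
    rw [continuous_iff_continuousAt]; exact fun t => (hH t).continuousAt
  have hHmono : Monotone H :=
    monotone_of_deriv_nonneg (fun t => (hH t).differentiableAt) (fun t => by
      rw [(hH t).deriv]; positivity)
  set Y : ℝ → ℝ := fun t => S t * E t - H t with hYdef
  -- derivative of Y on the interior
  have hScont : ContinuousOn S (Set.Ico 0 T) := fun t ht => (hS.2 t ht).continuousWithinAt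
  have hYcont : ContinuousOn Y (Set.Ico 0 T) :=
    (hScont.mul hEc.continuousOn).sub hHc.continuousOn
  have hYderiv : ∀ x ∈ Set.Ioo (0:ℝ) T, HasDerivAt Y
      (-(E x * (β x * S x / σz x) ^ 2)) x := by
    intro x hx
    have hx' : x ∈ Set.Ico 0 T := ⟨hx.1.le, hx.2⟩
    have hxIcc : x ∈ Set.Icc 0 T := ⟨hx.1.le, hx.2.le⟩
    have hS' : HasDerivAt S ((σv x) ^ 2 + 2 * f x * S x - (β x * S x / σz x) ^ 2) x :=
      (hS.2 x hx').hasDerivAt (Ico_mem_nhds hx.1 hx.2)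
    have := (hS'.mul (hE x)).sub (hH x)
    convert this using 1
    · rfl
    · rfl
    · rfl
    rw [hfe x hxIcc, hve x hxIcc]
    ring
  have hYanti : AntitoneOn Y (Set.Ico 0 T) := by
    apply antitoneOn_of_deriv_nonpos (convex_Ico 0 T) hYcont
    · rw [interior_Ico]
      exact fun x hx => (hYderiv x hx).differentiableAt.differentiableWithinAt
    · rw [interior_Ico]
      intro x hx
      rw [(hYderiv x hx).deriv]
      have h1 := (hEpos x).le
      have h2 : (0:ℝ) ≤ (β x * S x / σz x) ^ 2 := sq_nonneg _
      nlinarith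
  have hYanti' : AntitoneOn Y (Set.Ioo 0 T) := hYanti.mono Set.Ioo_subset_Ico_self
  have hbdd : BddBelow (Y '' Set.Ioo 0 T) := by
    refine ⟨-H T, fun y hy => ?_⟩
    obtain ⟨t, ht, rfl⟩ := hy
    have h1 : 0 ≤ S t * E t :=
      (mul_pos (hSpos t ⟨ht.1.le, ht.2⟩) (hEpos t)).le
    have h2 : H t ≤ H T := hHmono ht.2.le
    simp only [hYdef]
    linarith
  have hne : (Set.Ioo (0:ℝ) T).Nonempty := ⟨T / 2, by constructor <;> linarith⟩
  have hYtend : Tendsto Y (nhdsWithin T (Set.Iio T)) (nhds (sInf (Y '' Set.Ioo 0 T))) :=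
    AntitoneOn.tendsto_nhdsWithin_Ioo_left hne hYanti' hbdd
  set LY := sInf (Y '' Set.Ioo 0 T) with hLY
  have hYtend' : Tendsto Y (nhdsWithin T (Set.Ico 0 T)) (nhds LY) :=
    hYtend.mono_left (nhdsWithin_mono T Set.Ico_subset_Iio_self)
  set L : ℝ := (LY + H T) * Real.exp (F T) with hLdef
  have hSeq : ∀ t, S t = (Y t + H t) * Real.exp (F t) := by
    intro t
    simp only [hYdef, hEdef]
    rw [sub_add_cancel, mul_assoc, ← Real.exp_add, neg_add_cancel, Real.exp_zero, mul_one]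
  have hStend : Tendsto S (nhdsWithin T (Set.Ico 0 T)) (nhds L) := by
    have h1 : Tendsto (fun t => (Y t + H t) * Real.exp (F t))
        (nhdsWithin T (Set.Ico 0 T)) (nhds L) := by
      apply Tendsto.mul
      · exact hYtend'.add ((hHc.continuousAt.tendsto).mono_left nhdsWithin_le_nhds)
      · exact ((Real.continuous_exp.comp hFc).continuousAt.tendsto).mono_left nhdsWithin_le_nhds
    exact h1.congr (fun t => (hSeq t).symm)
  have hNeBot : (nhdsWithin T (Set.Ico 0 T)).NeBot := by
    rw [← mem_closure_iff_nhdsWithin_neBot, closure_Ico hT.ne]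
    exact ⟨hT.le, le_refl T⟩
  have hL0 : 0 ≤ L :=
    ge_of_tendsto hStend (eventually_mem_nhdsWithin.mono fun t ht => (hSpos t ht).le)
  refine ⟨L, hL0, hStend, fun t => if t < T then S t else L, ?_, fun t ht => if_pos ht.2,
    if_neg (lt_irrefl T)⟩
  intro t ht
  rcases lt_or_eq_of_le ht.2 with hlt | heq
  · have hc1 : ContinuousWithinAt S (Set.Ico 0 T) t :=
      (hS.2 t ⟨ht.1, hlt⟩).continuousWithinAt
    have hc2 : ContinuousWithinAt (fun t => if t < T then S t else L) (Set.Ico 0 T) t :=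
      hc1.congr (fun y hy => if_pos hy.2) (if_pos hlt)
    exact hc2.mono_of_mem_nhdsWithin
      (mem_nhdsWithin.mpr ⟨Set.Iio T, isOpen_Iio, hlt, fun y hy => ⟨hy.2.1, hy.1⟩⟩)
  · subst heq
    have : Set.Icc 0 t = Set.Ico 0 t ∪ {t} := (Set.Ico_union_right ht.1).symm
    rw [ContinuousWithinAt, this, nhdsWithin_union, if_neg (lt_irrefl t)]
    rw [tendsto_sup]
    constructor
    · exact hStend.congr' (eventually_mem_nhdsWithin.mono fun y hy => (if_pos hy.2).symm)
    · rw [nhdsWithin_singleton]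
      rw [tendsto_pure_left]
      intro s hs
      rw [if_neg (lt_irrefl t)]
      exact mem_of_mem_nhds hs
end
end

section
/- For every admissible trading intensity β, lim_{t→T⁻} S^β_t = 0 if and only if lim_{t→T⁻} φ₁(t,0) = 0. -/
open MeasureTheory Filter Set intervalIntegral

noncomputable section

/-- `φ₁(a,b) = exp(∫_b^a (f_u − k_u) du)` where `k = β² S/(σᶻ)²`. -/
def phi1 (f σz β S : ℝ → ℝ) (a b : ℝ) : ℝ :=
  Real.exp (∫ u in b..a, f u - (β u) ^ 2 * S u / (σz u) ^ 2)

/-- `φ₂(a,b) = exp(∫_b^a (f_u + g_u) du)`. -/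
def phi2 (f g : ℝ → ℝ) (a b : ℝ) : ℝ :=
  Real.exp (∫ u in b..a, f u + g u)

/-- `φ₃(a,b) = ∫_b^a φ₁(u,0) φ₂(0,u) k_u du` where `k = β² S/(σᶻ)²`. -/
def phi3 (f g σz β S : ℝ → ℝ) (a b : ℝ) : ℝ :=
  ∫ u in b..a, phi1 f σz β S u 0 * phi2 f g 0 u * ((β u) ^ 2 * S u / (σz u) ^ 2)

set_option maxHeartbeats 1000000 in
/-- `S_t → 0` as `t → T⁻` iff `φ₁(t,0) → 0` as `t → T⁻`. -/
theorem riccati_limit_zero_iff_phi1_zero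
    (T s₀ c : ℝ) (hT : 0 < T) (hs₀ : 0 < s₀) (hc : 0 < c)
    (f g σv σz : ℝ → ℝ)
    (hf : ContinuousOn f (Set.Icc 0 T)) (hg : ContinuousOn g (Set.Icc 0 T))
    (hσv : ContinuousOn σv (Set.Icc 0 T)) (hσz : ContinuousOn σz (Set.Icc 0 T))
    (hσvc : ∀ t ∈ Set.Icc 0 T, c ≤ σv t) (hσzc : ∀ t ∈ Set.Icc 0 T, c ≤ σz t)
    (β : ℝ → ℝ) (hβ : Admissible T β)
    (S : ℝ → ℝ) (hS : RiccatiSol T s₀ f σv σz β S)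
    (hSpos : ∀ t ∈ Set.Ico 0 T, 0 < S t)
    (hSlim : ∃ L : ℝ, Filter.Tendsto S (nhdsWithin T (Set.Ico 0 T)) (nhds L)) :
    Filter.Tendsto S (nhdsWithin T (Set.Ico 0 T)) (nhds 0) ↔
      Filter.Tendsto (fun t => phi1 f σz β S t 0)
        (nhdsWithin T (Set.Ico 0 T)) (nhds 0) := by
  classical
  set k : ℝ → ℝ := fun u => β u ^ 2 * S u / σz u ^ 2 with hk_def
  set K : ℝ → ℝ := fun t => ∫ u in (0:ℝ)..t, k u with hK_def
  set Fd : ℝ → ℝ := fun t => σv t ^ 2 + 2 * f t * S t - (β t * S t / σz t) ^ 2 with hFd_def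
  have hIcoIcc : Set.Ico (0:ℝ) T ⊆ Set.Icc 0 T := Set.Ico_subset_Icc_self
  have hσz0 : ∀ t ∈ Set.Icc (0:ℝ) T, σz t ≠ 0 := fun t ht => (lt_of_lt_of_le hc (hσzc t ht)).ne'
  have contS : ContinuousOn S (Set.Ico 0 T) := fun t ht => (hS.2 t ht).continuousWithinAt
  have contk : ContinuousOn k (Set.Ico 0 T) := by
    apply ContinuousOn.div ((hβ.1.pow 2).mul contS) ((hσz.mono hIcoIcc).pow 2)
    intro t ht
    exact pow_ne_zero 2 (hσz0 t (hIcoIcc ht))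
  have contF : ContinuousOn Fd (Set.Ico 0 T) := by
    apply ContinuousOn.sub
    · exact ((hσv.mono hIcoIcc).pow 2).add ((continuousOn_const.mul (hf.mono hIcoIcc)).mul contS)
    · apply ContinuousOn.pow
      apply ContinuousOn.div ((hβ.1).mul contS) (hσz.mono hIcoIcc)
      intro t ht; exact hσz0 t (hIcoIcc ht)
  obtain ⟨Cf, hCf⟩ := isCompact_Icc.exists_bound_of_continuousOn hf
  obtain ⟨Cv, hCv⟩ := isCompact_Icc.exists_bound_of_continuousOn hσv
  have hCf0 : 0 ≤ Cf := le_trans (norm_nonneg _) (hCf 0 ⟨le_refl 0, hT.le⟩)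
  have subIco : ∀ {a b : ℝ}, 0 ≤ a → 0 ≤ b → a < T → b < T → Set.uIcc a b ⊆ Set.Ico 0 T := by
    intro a b ha hb haT hbT x hx
    rw [Set.uIcc] at hx
    exact ⟨le_trans (le_inf ha hb) hx.1, lt_of_le_of_lt hx.2 (max_lt haT hbT)⟩
  have intk : ∀ {a b : ℝ}, 0 ≤ a → 0 ≤ b → a < T → b < T → IntervalIntegrable k volume a b :=
    fun ha hb haT hbT => (contk.mono (subIco ha hb haT hbT)).intervalIntegrable
  have intFd : ∀ {a b : ℝ}, 0 ≤ a → 0 ≤ b → a < T → b < T → IntervalIntegrable Fd volume a b :=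
    fun ha hb haT hbT => (contF.mono (subIco ha hb haT hbT)).intervalIntegrable
  have subIcc : ∀ {a b : ℝ}, 0 ≤ a → 0 ≤ b → a ≤ T → b ≤ T → Set.uIcc a b ⊆ Set.Icc 0 T := by
    intro a b ha hb haT hbT x hx
    rw [Set.uIcc] at hx
    exact ⟨le_trans (le_inf ha hb) hx.1, le_trans hx.2 (max_le haT hbT)⟩
  have intf : ∀ {a b : ℝ}, 0 ≤ a → 0 ≤ b → a ≤ T → b ≤ T → IntervalIntegrable f volume a b :=
    fun ha hb haT hbT => (hf.mono (subIcc ha hb haT hbT)).intervalIntegrable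
  have knonneg : ∀ u ∈ Set.Ico (0:ℝ) T, 0 ≤ k u := fun u hu =>
    div_nonneg (mul_nonneg (sq_nonneg _) (hSpos u hu).le) (sq_nonneg _)
  have Kmono : ∀ {a b : ℝ}, 0 ≤ a → a ≤ b → b < T → K a ≤ K b := by
    intro a b ha hab hbT
    have h1 : K a + (∫ u in a..b, k u) = K b :=
      intervalIntegral.integral_add_adjacent_intervals
        (intk (le_refl 0) ha (lt_of_le_of_lt ha (lt_of_le_of_lt hab hbT)) (lt_of_le_of_lt hab hbT))
        (intk ha (le_trans ha hab) (lt_of_le_of_lt hab hbT) hbT)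
    have h2 : 0 ≤ ∫ u in a..b, k u :=
      intervalIntegral.integral_nonneg hab
        (fun u hu => knonneg u ⟨le_trans ha hu.1, lt_of_le_of_lt hu.2 hbT⟩)
    linarith
  have fbd : ∀ t, 0 ≤ t → t ≤ T → |∫ u in (0:ℝ)..t, f u| ≤ Cf * T := by
    intro t ht htT
    have h1 : ‖∫ u in (0:ℝ)..t, f u‖ ≤ Cf * |t - 0| := by
      apply intervalIntegral.norm_integral_le_of_norm_le_const
      intro x hx
      rw [Set.uIoc_of_le ht] at hx
      exact hCf x ⟨hx.1.le, le_trans hx.2 htT⟩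
    rw [Real.norm_eq_abs] at h1
    calc |∫ u in (0:ℝ)..t, f u| ≤ Cf * |t - 0| := h1
      _ ≤ Cf * T := by
          rw [sub_zero, abs_of_nonneg ht]
          exact mul_le_mul_of_nonneg_left htT hCf0
  have phi1_eq : ∀ t, 0 ≤ t → t < T →
      phi1 f σz β S t 0 = Real.exp ((∫ u in (0:ℝ)..t, f u) - K t) := by
    intro t ht htT
    have : (∫ u in (0:ℝ)..t, (f u - β u ^ 2 * S u / σz u ^ 2))
        = (∫ u in (0:ℝ)..t, f u) - ∫ u in (0:ℝ)..t, k u :=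
      intervalIntegral.integral_sub (intf (le_refl 0) ht hT.le htT.le)
        (intk (le_refl 0) ht hT htT)
    simp only [phi1, hK_def]
    rw [this]
  have ftc : ∀ {a b : ℝ}, 0 ≤ a → a ≤ b → b < T → (∫ u in a..b, Fd u) = S b - S a := by
    intro a b ha hab hbT
    apply intervalIntegral.integral_eq_sub_of_hasDeriv_right_of_le hab
    · exact contS.mono (fun x hx => ⟨le_trans ha hx.1, lt_of_le_of_lt hx.2 hbT⟩)
    · intro x hx
      have hxI : x ∈ Set.Ico 0 T := ⟨(lt_of_le_of_lt ha hx.1).le, lt_trans hx.2 hbT⟩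
      exact ((hS.2 x hxI).hasDerivAt
        (Ico_mem_nhds (lt_of_le_of_lt ha hx.1) hxI.2)).hasDerivWithinAt
    · exact intFd ha (le_trans ha hab) (lt_of_le_of_lt hab hbT) hbT
  haveI hNB : (nhdsWithin T (Set.Ico 0 T)).NeBot := by
    apply mem_closure_iff_nhdsWithin_neBot.mp
    rw [closure_Ico hT.ne]
    exact Set.right_mem_Icc.2 hT.le
  -- lower bound for S when K is bounded
  have Slb : (∃ M, ∀ t ∈ Set.Ico (0:ℝ) T, K t ≤ M) →
      ∃ δ : ℝ, 0 < δ ∧ ∀ t ∈ Set.Ico (0:ℝ) T, δ ≤ S t := by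
    rintro ⟨M, hM⟩
    set w : ℝ → ℝ := fun u => k u - 2 * f u with hw_def
    set W : ℝ → ℝ := fun t => ∫ u in (0:ℝ)..t, w u with hW_def
    have contw : ContinuousOn w (Set.Ico 0 T) :=
      contk.sub (continuousOn_const.mul (hf.mono hIcoIcc))
    have intw : ∀ {a b : ℝ}, 0 ≤ a → 0 ≤ b → a < T → b < T → IntervalIntegrable w volume a b :=
      fun ha hb haT hbT => (contw.mono (subIco ha hb haT hbT)).intervalIntegrable
    have hWb : ∀ t, 0 ≤ t → t < T → W t ≤ M + 2 * (Cf * T) := by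
      intro t ht htT
      have hWeq : W t = K t - 2 * ∫ u in (0:ℝ)..t, f u := by
        simp only [hW_def, hK_def, hw_def]
        rw [intervalIntegral.integral_sub (intk (le_refl 0) ht hT htT)
          ((intf (le_refl 0) ht hT.le htT.le).const_mul 2)]
        rw [intervalIntegral.integral_const_mul]
      have h1 := hM t ⟨ht, htT⟩
      have h2 := (abs_le.mp (fbd t ht htT.le)).1
      rw [hWeq]; linarith
    have key : ∀ t ∈ Set.Ico (0:ℝ) T, s₀ ≤ S t * Real.exp (W t) := by
      intro b hb
      have hW0 : W 0 = 0 := intervalIntegral.integral_same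
      rcases eq_or_lt_of_le hb.1 with h0 | h0
      · rw [← h0, hW0, Real.exp_zero, mul_one, hS.1]
      · have hsub : Set.Icc (0:ℝ) b ⊆ Set.Ico 0 T :=
          fun x hx => ⟨hx.1, lt_of_le_of_lt hx.2 hb.2⟩
        have contW : ContinuousOn W (Set.Icc 0 b) := by
          have hint : MeasureTheory.IntegrableOn w (Set.uIcc 0 b) volume := by
            rw [Set.uIcc_of_le h0.le]
            exact (contw.mono hsub).integrableOn_Icc
          have := intervalIntegral.continuousOn_primitive_interval hint
          rwa [Set.uIcc_of_le h0.le] at this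
        have conth : ContinuousOn (fun t => S t * Real.exp (W t)) (Set.Icc 0 b) :=
          (contS.mono hsub).mul (Real.continuous_exp.comp_continuousOn contW)
        have hmono : StrictMonoOn (fun t => S t * Real.exp (W t)) (Set.Icc 0 b) := by
          apply strictMonoOn_of_deriv_pos (convex_Icc 0 b) conth
          intro x hx
          rw [interior_Icc] at hx
          have hxI : x ∈ Set.Ico 0 T := ⟨hx.1.le, lt_trans hx.2 hb.2⟩
          have hdS : HasDerivAt S (Fd x) x :=
            (hS.2 x hxI).hasDerivAt (Ico_mem_nhds hx.1 hxI.2)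
          have hdW : HasDerivAt W (w x) x := by
            apply intervalIntegral.integral_hasDerivAt_right
              (intw (le_refl 0) hxI.1 hT hxI.2)
            · exact (ContinuousOn.stronglyMeasurableAtFilter isOpen_Ioo
                (contw.mono Set.Ioo_subset_Ico_self)) x ⟨hx.1, hxI.2⟩
            · exact contw.continuousAt (Ico_mem_nhds hx.1 hxI.2)
          have hdE : HasDerivAt (fun t => Real.exp (W t)) (Real.exp (W x) * w x) x := hdW.exp
          have hdh : HasDerivAt (fun t => S t * Real.exp (W t))
              (Fd x * Real.exp (W x) + S x * (Real.exp (W x) * w x)) x := hdS.mul hdE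
          rw [hdh.deriv]
          have hσzx : σz x ≠ 0 := hσz0 x (hIcoIcc hxI)
          have hσvx : 0 < σv x := lt_of_lt_of_le hc (hσvc x (hIcoIcc hxI))
          have hval : Fd x * Real.exp (W x) + S x * (Real.exp (W x) * w x)
              = Real.exp (W x) * σv x ^ 2 := by
            simp only [hFd_def, hw_def, hk_def]
            field_simp
            ring
          rw [hval]
          exact mul_pos (Real.exp_pos _) (pow_pos hσvx 2)
        have := hmono (Set.left_mem_Icc.2 h0.le) (Set.right_mem_Icc.2 h0.le) h0
        simp only [hW0, Real.exp_zero, mul_one, hS.1] at this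
        exact this.le
    refine ⟨s₀ * Real.exp (-(M + 2 * (Cf * T))), by positivity, fun t ht => ?_⟩
    have h1 := key t ht
    have h2 : Real.exp (W t) ≤ Real.exp (M + 2 * (Cf * T)) :=
      Real.exp_le_exp.2 (hWb t ht.1 ht.2)
    have h3 : 0 < Real.exp (W t) := Real.exp_pos _
    have hS' : s₀ / Real.exp (W t) ≤ S t := by
      rw [div_le_iff₀ h3]
      linarith
    have hexp : Real.exp (-(M + 2 * (Cf * T))) ≤ Real.exp (-(W t)) :=
      Real.exp_le_exp.2 (by linarith [hWb t ht.1 ht.2])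
    have : s₀ * Real.exp (-(W t)) = s₀ / Real.exp (W t) := by
      rw [Real.exp_neg, div_eq_mul_inv]
    nlinarith [mul_le_mul_of_nonneg_left hexp hs₀.le]
  -- K bounded implies phi1 does not tend to 0
  have keyKbdd : (∃ M, ∀ t ∈ Set.Ico (0:ℝ) T, K t ≤ M) →
      ¬ Filter.Tendsto (fun t => phi1 f σz β S t 0) (nhdsWithin T (Set.Ico 0 T)) (nhds 0) := by
    rintro ⟨M, hM⟩ hcon
    have hev : ∀ᶠ t in nhdsWithin T (Set.Ico 0 T),
        Real.exp (-(Cf * T) - M) ≤ phi1 f σz β S t 0 := by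
      filter_upwards [self_mem_nhdsWithin] with t ht
      rw [phi1_eq t ht.1 ht.2]
      apply Real.exp_le_exp.2
      have h1 := (abs_le.mp (fbd t ht.1 ht.2.le)).1
      have h2 := hM t ht
      linarith
    have := ge_of_tendsto hcon hev
    exact absurd this (not_le.2 (Real.exp_pos _))
  -- K unbounded implies K tends to atTop
  have Ktop : (¬ ∃ M, ∀ t ∈ Set.Ico (0:ℝ) T, K t ≤ M) →
      Filter.Tendsto K (nhdsWithin T (Set.Ico 0 T)) Filter.atTop := by
    intro hub
    push_neg at hub
    rw [Filter.tendsto_atTop]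
    intro M
    obtain ⟨t₀, ht₀, hMt₀⟩ := hub M
    filter_upwards [self_mem_nhdsWithin,
      mem_nhdsWithin_of_mem_nhds (Ioi_mem_nhds ht₀.2)] with t ht hts
    exact le_trans hMt₀.le (Kmono ht₀.1 (le_of_lt hts) ht.2)
  -- K atTop implies phi1 tends to 0
  have keyKtop : Filter.Tendsto K (nhdsWithin T (Set.Ico 0 T)) Filter.atTop →
      Filter.Tendsto (fun t => phi1 f σz β S t 0) (nhdsWithin T (Set.Ico 0 T)) (nhds 0) := by
    intro hK
    have h1 : Filter.Tendsto (fun t => Real.exp (Cf * T - K t))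
        (nhdsWithin T (Set.Ico 0 T)) (nhds 0) := by
      apply Real.tendsto_exp_atBot.comp
      apply Filter.tendsto_atBot_add_const_left _ (Cf * T)
      exact Filter.tendsto_neg_atBot_iff.mpr hK
    apply squeeze_zero' ?_ ?_ h1
    · filter_upwards [self_mem_nhdsWithin] with t ht
      rw [phi1_eq t ht.1 ht.2]
      exact (Real.exp_pos _).le
    · filter_upwards [self_mem_nhdsWithin] with t ht
      rw [phi1_eq t ht.1 ht.2]
      apply Real.exp_le_exp.2
      have h1 := (abs_le.mp (fbd t ht.1 ht.2.le)).2
      linarith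
  -- K atTop and S tends to positive limit: contradiction
  have contraA : ∀ L : ℝ, 0 < L → Filter.Tendsto S (nhdsWithin T (Set.Ico 0 T)) (nhds L) →
      Filter.Tendsto K (nhdsWithin T (Set.Ico 0 T)) Filter.atTop → False := by
    intro L hL hSL hK
    have hev : ∀ᶠ t in nhdsWithin T (Set.Ico 0 T), L / 2 < S t ∧ S t < L + 1 := by
      have h1 := hSL.eventually (eventually_gt_nhds (by linarith : L / 2 < L))
      have h2 := hSL.eventually (eventually_lt_nhds (by linarith : L < L + 1))
      filter_upwards [h1, h2] with t h1 h2 using ⟨h1, h2⟩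
    rw [eventually_nhdsWithin_iff, Metric.eventually_nhds_iff] at hev
    obtain ⟨ε, hε, hball⟩ := hev
    set t₀ := max (T - ε / 2) 0 with ht₀_def
    have ht₀0 : 0 ≤ t₀ := le_max_right _ _
    have ht₀T : t₀ < T := max_lt (by linarith) hT
    have ht₀ε : T - ε < t₀ := lt_of_lt_of_le (by linarith) (le_max_left _ _)
    have hSbd : ∀ t, t₀ ≤ t → t < T → L / 2 < S t ∧ S t < L + 1 := by
      intro t h1 h2
      apply hball _ ⟨le_trans ht₀0 h1, h2⟩
      rw [Real.dist_eq, abs_lt]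
      constructor <;> [linarith; linarith]
    set C := Cv ^ 2 + 2 * Cf * (L + 1) with hC_def
    have hCv0 : 0 ≤ Cv := le_trans (norm_nonneg _) (hCv 0 ⟨le_refl 0, hT.le⟩)
    have hC0 : 0 ≤ C := by positivity
    have hKbd : ∀ t, t₀ ≤ t → t < T → K t ≤ K t₀ + 2 / L * (S t₀ + C * T) := by
      intro t h1 h2
      have ht0 : 0 ≤ t := le_trans ht₀0 h1
      have hint : (∫ u in t₀..t, Fd u) = S t - S t₀ := ftc ht₀0 h1 h2
      have hintk : (∫ u in t₀..t, k u) = K t - K t₀ := by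
        have := intervalIntegral.integral_add_adjacent_intervals
          (intk (le_refl 0) ht₀0 hT ht₀T) (intk ht₀0 ht0 ht₀T h2)
        simp only [hK_def] at this ⊢
        linarith
      have hmono : (∫ u in t₀..t, Fd u) ≤ ∫ u in t₀..t, (C - L / 2 * k u) := by
        apply intervalIntegral.integral_mono_on h1 (intFd ht₀0 ht0 ht₀T h2)
        · exact intervalIntegrable_const.sub ((intk ht₀0 ht0 ht₀T h2).const_mul _)
        · intro x hx
          have hxI : x ∈ Set.Ico 0 T := ⟨le_trans ht₀0 hx.1, lt_of_le_of_lt hx.2 h2⟩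
          have hSx := hSbd x hx.1 hxI.2
          have hσzx : σz x ≠ 0 := hσz0 x (hIcoIcc hxI)
          have e1 : (β x * S x / σz x) ^ 2 = k x * S x := by
            simp only [hk_def]
            field_simp
          have e2 : σv x ^ 2 ≤ Cv ^ 2 := by
            have := hCv x (hIcoIcc hxI)
            rw [Real.norm_eq_abs] at this
            nlinarith [abs_nonneg (σv x), le_abs_self (σv x), neg_abs_le (σv x)]
          have e3 : 2 * f x * S x ≤ 2 * Cf * (L + 1) := by
            have hfx := hCf x (hIcoIcc hxI)
            rw [Real.norm_eq_abs] at hfx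
            have hfx2 := (abs_le.mp hfx).2
            have hSx0 := (hSpos x hxI).le
            nlinarith
          have e4 : k x * (L / 2) ≤ k x * S x :=
            mul_le_mul_of_nonneg_left hSx.1.le (knonneg x hxI)
          simp only [hFd_def, hC_def]
          rw [e1] at *
          nlinarith [knonneg x hxI]
      have hsplit : (∫ u in t₀..t, (C - L / 2 * k u))
          = C * (t - t₀) - L / 2 * (K t - K t₀) := by
        rw [intervalIntegral.integral_sub intervalIntegrable_const
          ((intk ht₀0 ht0 ht₀T h2).const_mul _)]
        rw [intervalIntegral.integral_const, intervalIntegral.integral_const_mul, hintk]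
        rw [smul_eq_mul]
        ring
      have hSpos_t := hSpos t ⟨ht0, h2⟩
      have hSt₀pos := hSpos t₀ ⟨ht₀0, ht₀T⟩
      have hbig : L / 2 * (K t - K t₀) ≤ S t₀ + C * T := by
        have htT : t - t₀ ≤ T := by linarith
        have : C * (t - t₀) ≤ C * T := mul_le_mul_of_nonneg_left htT hC0
        nlinarith
      have h2L : (0:ℝ) < L / 2 := by linarith
      have := (le_div_iff₀' h2L).mpr hbig
      have hdiv : (S t₀ + C * T) / (L / 2) = 2 / L * (S t₀ + C * T) := by
        have hLne : L ≠ 0 := ne_of_gt hL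
        field_simp
      rw [hdiv] at this
      linarith
    have h1 := (Filter.tendsto_atTop.mp hK) (K t₀ + 2 / L * (S t₀ + C * T) + 1)
    have h2 : ∀ᶠ t in nhdsWithin T (Set.Ico 0 T), t ∈ Set.Ioi t₀ :=
      mem_nhdsWithin_of_mem_nhds (Ioi_mem_nhds ht₀T)
    obtain ⟨t, hta, htb, htc⟩ := (h1.and (h2.and self_mem_nhdsWithin)).exists
    have := hKbd t (le_of_lt htb) htc.2
    linarith
  constructor
  · intro hS0
    by_cases hbdd : ∃ M, ∀ t ∈ Set.Ico (0:ℝ) T, K t ≤ M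
    · obtain ⟨δ, hδ, hδS⟩ := Slb hbdd
      have : δ ≤ 0 := ge_of_tendsto hS0 (by
        filter_upwards [self_mem_nhdsWithin] with t ht using hδS t ht)
      linarith
    · exact keyKtop (Ktop hbdd)
  · intro hφ
    obtain ⟨L, hL⟩ := hSlim
    have hL0 : 0 ≤ L := ge_of_tendsto hL (by
      filter_upwards [self_mem_nhdsWithin] with t ht using (hSpos t ht).le)
    rcases eq_or_lt_of_le hL0 with h | h
    · rwa [← h] at hL
    · exfalso
      by_cases hbdd : ∃ M, ∀ t ∈ Set.Ico (0:ℝ) T, K t ≤ M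
      · exact keyKbdd hbdd hφ
      · exact contraA L h hL (Ktop hbdd)
end
end

section
/- For every admissible trading intensity β and every t ∈ [0,T), the following identity holds: φ₃(T,t) = φ₁(t,0) φ₂(0,t) − φ₁(T,0) φ₂(0,T) − ∫_t^T g_r φ₁(r,0) φ₂(0,r) dr, where φ₁(T,0) := lim_{s→T⁻} φ₁(s,0) and φ₃(T,t) := lim_{s→T⁻} φ₃(s,t). In particular φ₃(T,t) is finite for every t ∈ [0,T), sup_{t∈[0,T)} |φ₃(T,t)| < ∞, and lim_{t→T⁻} φ₃(T,t) = 0. -/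
open MeasureTheory Filter Set intervalIntegral
open Topology

noncomputable section

/-- the representation of `φ₃(T,t)` (the limits defining `φ₁(T,0)` and
`φ₃(T,t)` exist), its uniform boundedness, and `φ₃(T,t) → 0` as `t → T⁻`. -/
theorem phi3_terminal_representation
    (T s₀ c : ℝ) (hT : 0 < T) (hs₀ : 0 < s₀) (hc : 0 < c)
    (f g σv σz : ℝ → ℝ)
    (hf : ContinuousOn f (Set.Icc 0 T)) (hg : ContinuousOn g (Set.Icc 0 T))
    (hσv : ContinuousOn σv (Set.Icc 0 T)) (hσz : ContinuousOn σz (Set.Icc 0 T))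
    (hσvc : ∀ t ∈ Set.Icc 0 T, c ≤ σv t) (hσzc : ∀ t ∈ Set.Icc 0 T, c ≤ σz t)
    (β : ℝ → ℝ) (hβ : Admissible T β)
    (S : ℝ → ℝ) (hS : RiccatiSol T s₀ f σv σz β S)
    (hSpos : ∀ t ∈ Set.Ico 0 T, 0 < S t) :
    ∃ L1 : ℝ,
      Filter.Tendsto (fun s => phi1 f σz β S s 0)
        (nhdsWithin T (Set.Ico 0 T)) (nhds L1) ∧
      ∃ L3 : ℝ → ℝ,
        (∀ t ∈ Set.Ico 0 T,
          Filter.Tendsto (fun s => phi3 f g σz β S s t)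
            (nhdsWithin T (Set.Ico 0 T)) (nhds (L3 t))) ∧
        (∀ t ∈ Set.Ico 0 T,
          L3 t = phi1 f σz β S t 0 * phi2 f g 0 t - L1 * phi2 f g 0 T
            - ∫ r in t..T, g r * phi1 f σz β S r 0 * phi2 f g 0 r) ∧
        (∃ M : ℝ, ∀ t ∈ Set.Ico 0 T, |L3 t| ≤ M) ∧
        Filter.Tendsto L3 (nhdsWithin T (Set.Ico 0 T)) (nhds 0) := by
  obtain ⟨hβc, hβpos, -⟩ := hβ
  obtain ⟨-, hSderiv⟩ := hS
  have hIco : Ico (0:ℝ) T ⊆ Icc 0 T := Ico_subset_Icc_self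
  set k : ℝ → ℝ := fun u => (β u)^2 * S u / (σz u)^2 with hkdef
  have hScont : ContinuousOn S (Ico 0 T) := fun x hx => (hSderiv x hx).continuousWithinAt
  have hkcont : ContinuousOn k (Ico 0 T) := by
    apply ((hβc.pow 2).mul hScont).div ((hσz.mono hIco).pow 2)
    intro x hx
    have := lt_of_lt_of_le hc (hσzc x (hIco hx))
    exact pow_ne_zero 2 this.ne'
  have hk0 : ∀ u ∈ Ico (0:ℝ) T, 0 ≤ k u := by
    intro u hu
    have h1 := (hSpos u hu).le
    have h2 := lt_of_lt_of_le hc (hσzc u (hIco hu))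
    simp only [hkdef]
    positivity
  set A : ℝ → ℝ := fun s => ∫ u in (0:ℝ)..s, (f u - k u) with hAdef
  set C : ℝ → ℝ := fun s => ∫ u in (0:ℝ)..s, (f u + g u) with hCdef
  have hphi1 : ∀ s, phi1 f σz β S s 0 = Real.exp (A s) := by
    intro s; simp only [phi1, hAdef, hkdef]
  have hphi2 : ∀ s, phi2 f g 0 s = Real.exp (-C s) := by
    intro s; rw [phi2, intervalIntegral.integral_symm]
  set P : ℝ → ℝ := fun s => Real.exp (A s - C s) with hPdef
  have hP : ∀ s, phi1 f σz β S s 0 * phi2 f g 0 s = P s := by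
    intro s
    rw [hphi1, hphi2, ← Real.exp_add]
    show Real.exp (A s + -C s) = Real.exp (A s - C s)
    rw [sub_eq_add_neg]
  -- basic integrability / continuity facts
  have hsubIcc : ∀ s ∈ Ico (0:ℝ) T, Icc (0:ℝ) s ⊆ Ico 0 T :=
    fun s hs x hx => ⟨hx.1, lt_of_le_of_lt hx.2 hs.2⟩
  have hfkcont : ContinuousOn (fun u => f u - k u) (Ico 0 T) := (hf.mono hIco).sub hkcont
  have hfkint : ∀ s ∈ Ico (0:ℝ) T, IntervalIntegrable (fun u => f u - k u) volume 0 s := by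
    intro s hs
    apply ContinuousOn.intervalIntegrable
    rw [uIcc_of_le hs.1]
    exact hfkcont.mono (hsubIcc s hs)
  have hfint : ∀ s ∈ Ico (0:ℝ) T, IntervalIntegrable f volume 0 s := by
    intro s hs
    apply ContinuousOn.intervalIntegrable
    rw [uIcc_of_le hs.1]
    exact (hf.mono hIco).mono (hsubIcc s hs)
  have hkint : ∀ s ∈ Ico (0:ℝ) T, IntervalIntegrable k volume 0 s := by
    intro s hs
    apply ContinuousOn.intervalIntegrable
    rw [uIcc_of_le hs.1]
    exact hkcont.mono (hsubIcc s hs)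
  have hAcont : ContinuousOn A (Ico 0 T) := by
    intro x hx
    obtain ⟨s, hxs, hsT⟩ := exists_between hx.2
    have hs : s ∈ Ico (0:ℝ) T := ⟨hx.1.trans hxs.le, hsT⟩
    have hint : IntegrableOn (fun u => f u - k u) (uIcc (0:ℝ) s) volume := by
      rw [uIcc_of_le hs.1]
      exact (hfkcont.mono (hsubIcc s hs)).integrableOn_Icc
    have h1 : ContinuousOn A (uIcc (0:ℝ) s) :=
      intervalIntegral.continuousOn_primitive_interval hint
    have hx' : x ∈ uIcc (0:ℝ) s := by rw [uIcc_of_le hs.1]; exact ⟨hx.1, hxs.le⟩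
    refine (h1 x hx').mono_of_mem_nhdsWithin ?_
    refine mem_of_superset (inter_mem_nhdsWithin _ (Iio_mem_nhds hxs)) ?_
    rw [uIcc_of_le hs.1]
    exact fun y hy => ⟨hy.1.1, hy.2.le⟩
  have hfgint : IntegrableOn (fun u => f u + g u) (uIcc (0:ℝ) T) volume := by
    rw [uIcc_of_le hT.le]; exact (hf.add hg).integrableOn_Icc
  have hCcont : ContinuousOn C (Icc 0 T) := by
    have := intervalIntegral.continuousOn_primitive_interval hfgint
    rwa [uIcc_of_le hT.le] at this
  have hPcont : ContinuousOn P (Ico 0 T) :=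
    Real.continuous_exp.comp_continuousOn (hAcont.sub (hCcont.mono hIco))
  have hPpos : ∀ s, 0 < P s := fun s => Real.exp_pos _
  -- bounds
  obtain ⟨Mf, hMf⟩ := isCompact_Icc.exists_bound_of_continuousOn hf
  obtain ⟨Mg, hMg⟩ := isCompact_Icc.exists_bound_of_continuousOn hg
  have h0mem : (0:ℝ) ∈ Icc (0:ℝ) T := ⟨le_rfl, hT.le⟩
  have hMf0 : 0 ≤ Mf := le_trans (norm_nonneg _) (hMf 0 h0mem)
  have hMg0 : 0 ≤ Mg := le_trans (norm_nonneg _) (hMg 0 h0mem)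
  have hAle : ∀ s ∈ Ico (0:ℝ) T, A s ≤ Mf * T := by
    intro s hs
    have h1 : A s ≤ ∫ _u in (0:ℝ)..s, Mf := by
      apply intervalIntegral.integral_mono_on hs.1 (hfkint s hs) intervalIntegrable_const
      intro x hx
      have hx' : x ∈ Ico (0:ℝ) T := hsubIcc s hs hx
      have h2 : |f x| ≤ Mf := by rw [← Real.norm_eq_abs]; exact hMf x (hIco hx')
      have h3 := hk0 x hx'
      have := (abs_le.mp h2).2
      simp only [hkdef] at h3 ⊢
      linarith
    rw [intervalIntegral.integral_const, smul_eq_mul, sub_zero] at h1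
    nlinarith [hs.1, hs.2]
  have hCabs : ∀ s ∈ Icc (0:ℝ) T, |C s| ≤ (Mf + Mg) * T := by
    intro s hs
    have h1 : ‖∫ u in (0:ℝ)..s, (f u + g u)‖ ≤ (Mf + Mg) * |s - 0| := by
      apply intervalIntegral.norm_integral_le_of_norm_le_const
      intro x hx
      rw [uIoc_of_le hs.1] at hx
      have hx' : x ∈ Icc (0:ℝ) T := ⟨hx.1.le, hx.2.trans hs.2⟩
      calc ‖f x + g x‖ ≤ ‖f x‖ + ‖g x‖ := norm_add_le _ _
        _ ≤ Mf + Mg := add_le_add (hMf x hx') (hMg x hx')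
    rw [Real.norm_eq_abs, sub_zero, abs_of_nonneg hs.1] at h1
    have h2 : (Mf + Mg) * s ≤ (Mf + Mg) * T :=
      mul_le_mul_of_nonneg_left hs.2 (by linarith)
    exact le_trans h1 h2
  set MP : ℝ := Real.exp (Mf * T + (Mf + Mg) * T) with hMPdef
  have hPle : ∀ s ∈ Ico (0:ℝ) T, P s ≤ MP := by
    intro s hs
    apply Real.exp_le_exp.mpr
    have h1 := hAle s hs
    have h2 := (abs_le.mp (hCabs s (hIco hs))).1
    linarith
  -- derivatives
  have hAderiv : ∀ x ∈ Ioo (0:ℝ) T, HasDerivAt A (f x - k x) x := by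
    intro x hx
    have hx' : x ∈ Ico (0:ℝ) T := ⟨hx.1.le, hx.2⟩
    exact intervalIntegral.integral_hasDerivAt_right (hfkint x hx')
      ((hfkcont.mono Ioo_subset_Ico_self).stronglyMeasurableAtFilter isOpen_Ioo x hx)
      (hfkcont.continuousAt (Ico_mem_nhds hx.1 hx.2))
  have hCderiv : ∀ x ∈ Ioo (0:ℝ) T, HasDerivAt C (f x + g x) x := by
    intro x hx
    have hx' : x ∈ Ico (0:ℝ) T := ⟨hx.1.le, hx.2⟩
    have hfg : ContinuousOn (fun u => f u + g u) (Ico 0 T) := (hf.add hg).mono hIco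
    refine intervalIntegral.integral_hasDerivAt_right ?_
      ((hfg.mono Ioo_subset_Ico_self).stronglyMeasurableAtFilter isOpen_Ioo x hx)
      (hfg.continuousAt (Ico_mem_nhds hx.1 hx.2))
    apply ContinuousOn.intervalIntegrable
    rw [uIcc_of_le hx'.1]
    exact hfg.mono (hsubIcc x hx')
  have hPderiv : ∀ x ∈ Ioo (0:ℝ) T, HasDerivAt P (-((k x + g x) * P x)) x := by
    intro x hx
    have h := ((hAderiv x hx).sub (hCderiv x hx)).exp
    have heq : Real.exp (A x - C x) * (f x - k x - (f x + g x)) = -((k x + g x) * P x) := by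
      show _ = -((k x + g x) * Real.exp (A x - C x))
      ring
    have h := h.congr_deriv heq
    exact h
  -- the key identity
  set h : ℝ → ℝ := fun r => g r * phi1 f σz β S r 0 * phi2 f g 0 r with hhdef
  have hhP : ∀ r, h r = g r * P r := by
    intro r
    show g r * phi1 f σz β S r 0 * phi2 f g 0 r = _
    rw [mul_assoc, hP r]
  have hid : ∀ t ∈ Ico (0:ℝ) T, ∀ s ∈ Ico (0:ℝ) T, t ≤ s →
      phi3 f g σz β S s t = P t - P s - ∫ r in t..s, h r := by
    intro t ht s hs hts
    have hIccsub : Icc t s ⊆ Ico (0:ℝ) T :=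
      fun x hx => ⟨ht.1.trans hx.1, lt_of_le_of_lt hx.2 hs.2⟩
    have hkPc : ContinuousOn (fun u => k u * P u) (Icc t s) := (hkcont.mul hPcont).mono hIccsub
    have hgPc : ContinuousOn (fun u => g u * P u) (Icc t s) :=
      ((hg.mono hIco).mul hPcont).mono hIccsub
    have hkPint : IntervalIntegrable (fun u => k u * P u) volume t s := by
      apply ContinuousOn.intervalIntegrable; rwa [uIcc_of_le hts]
    have hgPint : IntervalIntegrable (fun u => g u * P u) volume t s := by
      apply ContinuousOn.intervalIntegrable; rwa [uIcc_of_le hts]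
    have hsum : IntervalIntegrable (fun u => -((k u + g u) * P u)) volume t s := by
      have heq : (fun u => -((k u + g u) * P u)) = fun u => -(k u * P u + g u * P u) := by
        funext u; ring
      rw [heq]
      exact (hkPint.add hgPint).neg
    have hftc : ∫ x in t..s, (-((k x + g x) * P x)) = P s - P t := by
      apply intervalIntegral.integral_eq_sub_of_hasDeriv_right_of_le hts (hPcont.mono hIccsub)
        ?_ hsum
      intro x hx
      have hx' : x ∈ Ioo (0:ℝ) T := ⟨lt_of_le_of_lt ht.1 hx.1, lt_trans hx.2 hs.2⟩
      exact (hPderiv x hx').hasDerivWithinAt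
    have hneg : ∫ x in t..s, (-((k x + g x) * P x)) = -∫ x in t..s, ((k x + g x) * P x) :=
      intervalIntegral.integral_neg
    have hsplit : ∫ x in t..s, ((k x + g x) * P x)
        = (∫ x in t..s, k x * P x) + ∫ x in t..s, g x * P x := by
      rw [← intervalIntegral.integral_add hkPint hgPint]
      congr 1
      funext x
      ring
    have hphi3 : phi3 f g σz β S s t = ∫ u in t..s, k u * P u := by
      rw [phi3]
      congr 1
      funext u
      rw [hP u]
      show P u * k u = k u * P u
      ring
    have hgh : ∫ r in t..s, h r = ∫ r in t..s, g r * P r := by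
      congr 1; funext r; exact hhP r
    rw [hphi3, hgh]
    have h5 : ∫ x in t..s, k x * P x = P t - P s - ∫ x in t..s, g x * P x := by
      rw [hneg] at hftc
      rw [hsplit] at hftc
      linarith
    exact h5
  -- filter facts
  have hFeq : ∀ a, 0 ≤ a → a < T → 𝓝[Ico (0:ℝ) T] T = 𝓝[Ioo a T] T := by
    intro a ha haT
    rw [nhdsWithin_restrict' (Ico (0:ℝ) T) (Ioi_mem_nhds haT),
        nhdsWithin_restrict' (Ioo a T) (Ioi_mem_nhds haT)]
    congr 1
    ext x
    simp only [mem_inter_iff, mem_Ico, mem_Ioo, mem_Ioi]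
    constructor
    · rintro ⟨⟨h0, hT'⟩, hax⟩; exact ⟨⟨hax, hT'⟩, hax⟩
    · rintro ⟨⟨hax, hT'⟩, -⟩; exact ⟨⟨ha.trans hax.le, hT'⟩, hax⟩
  have hFle : 𝓝[Ico (0:ℝ) T] T ≤ 𝓝[Iio T] T := by
    rw [hFeq 0 le_rfl hT]; exact nhdsWithin_mono _ Ioo_subset_Iio_self
  have hFleIcc : 𝓝[Ico (0:ℝ) T] T ≤ 𝓝[Icc (0:ℝ) T] T := nhdsWithin_mono _ hIco
  -- L1 : limit of phi1 at T
  set K : ℝ → ℝ := fun s => ∫ u in (0:ℝ)..s, k u with hKdef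
  have hAsplit : ∀ s ∈ Ico (0:ℝ) T, A s = (∫ u in (0:ℝ)..s, f u) - K s := by
    intro s hs
    show (∫ u in (0:ℝ)..s, (f u - k u)) = _
    exact intervalIntegral.integral_sub (hfint s hs) (hkint s hs)
  have hKmono : MonotoneOn K (Ioo (0:ℝ) T) := by
    intro x hx y hy hxy
    have hx' : x ∈ Ico (0:ℝ) T := ⟨hx.1.le, hx.2⟩
    have hxyint : IntervalIntegrable k volume x y := by
      apply ContinuousOn.intervalIntegrable
      rw [uIcc_of_le hxy]
      exact hkcont.mono (fun u hu => ⟨hx.1.le.trans hu.1, lt_of_le_of_lt hu.2 hy.2⟩)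
    have h1 : K x + ∫ u in x..y, k u = K y :=
      intervalIntegral.integral_add_adjacent_intervals (hkint x hx') hxyint
    have h2 : 0 ≤ ∫ u in x..y, k u := by
      apply intervalIntegral.integral_nonneg hxy
      intro u hu
      exact hk0 u ⟨hx.1.le.trans hu.1, lt_of_le_of_lt hu.2 hy.2⟩
    linarith
  set E : ℝ → ℝ := fun s => Real.exp (-K s) with hEdef
  have hEanti : AntitoneOn E (Ioo (0:ℝ) T) := by
    intro x hx y hy hxy
    exact Real.exp_le_exp.mpr (neg_le_neg (hKmono hx hy hxy))
  have hEbdd : BddBelow (E '' Ioo (0:ℝ) T) := by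
    refine ⟨0, ?_⟩
    rintro y ⟨x, -, rfl⟩
    exact (Real.exp_pos _).le
  have hEtend : Tendsto E (𝓝[<] T) (𝓝 (sInf (E '' Ioo (0:ℝ) T))) :=
    hEanti.tendsto_nhdsWithin_Ioo_left (nonempty_Ioo.2 hT) hEbdd
  have hfprimcont : ContinuousOn (fun s => ∫ u in (0:ℝ)..s, f u) (Icc 0 T) := by
    have h1 : IntegrableOn f (uIcc (0:ℝ) T) volume := by
      rw [uIcc_of_le hT.le]; exact hf.integrableOn_Icc
    have := intervalIntegral.continuousOn_primitive_interval h1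
    rwa [uIcc_of_le hT.le] at this
  have hfTend : Tendsto (fun s => ∫ u in (0:ℝ)..s, f u) (𝓝[Ico (0:ℝ) T] T)
      (𝓝 (∫ u in (0:ℝ)..T, f u)) :=
    ((hfprimcont T ⟨hT.le, le_rfl⟩).tendsto).mono_left hFleIcc
  set L1 : ℝ := Real.exp (∫ u in (0:ℝ)..T, f u) * sInf (E '' Ioo (0:ℝ) T) with hL1def
  have hL1 : Tendsto (fun s => phi1 f σz β S s 0) (𝓝[Ico (0:ℝ) T] T) (𝓝 L1) := by
    have h1 : Tendsto (fun s => Real.exp (∫ u in (0:ℝ)..s, f u) * E s)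
        (𝓝[Ico (0:ℝ) T] T) (𝓝 L1) :=
      ((Real.continuous_exp.tendsto _).comp hfTend).mul (hEtend.mono_left hFle)
    apply h1.congr'
    filter_upwards [self_mem_nhdsWithin] with s hs
    rw [hphi1 s, hAsplit s hs, sub_eq_add_neg, Real.exp_add]
  -- tendsto of phi2 and P
  have hphi2tend : Tendsto (fun s => phi2 f g 0 s) (𝓝[Ico (0:ℝ) T] T)
      (𝓝 (phi2 f g 0 T)) := by
    have h1 : Tendsto C (𝓝[Ico (0:ℝ) T] T) (𝓝 (C T)) :=
      ((hCcont T ⟨hT.le, le_rfl⟩).tendsto).mono_left hFleIcc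
    have h2 := (Real.continuous_exp.tendsto _).comp h1.neg
    rw [hphi2 T]
    exact h2.congr (fun s => (hphi2 s).symm)
  have hPtend : Tendsto P (𝓝[Ico (0:ℝ) T] T) (𝓝 (L1 * phi2 f g 0 T)) :=
    (hL1.mul hphi2tend).congr hP
  -- integrability of h on [0,T]
  have hhcont : ContinuousOn h (Ico (0:ℝ) T) := by
    have h1 : ContinuousOn (fun r => g r * P r) (Ico (0:ℝ) T) := (hg.mono hIco).mul hPcont
    exact h1.congr (fun r _ => hhP r)
  have hhbound : ∀ r ∈ Ico (0:ℝ) T, ‖h r‖ ≤ Mg * MP := by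
    intro r hr
    rw [Real.norm_eq_abs, hhP r, abs_mul, abs_of_pos (hPpos r)]
    apply mul_le_mul _ (hPle r hr) (hPpos r).le hMg0
    rw [← Real.norm_eq_abs]; exact hMg r (hIco hr)
  have hMP0 : (0:ℝ) < MP := Real.exp_pos _
  have hhint : IntegrableOn h (Icc (0:ℝ) T) volume := by
    rw [integrableOn_Icc_iff_integrableOn_Ico]
    have hmeas : AEStronglyMeasurable h (volume.restrict (Ico (0:ℝ) T)) :=
      hhcont.aestronglyMeasurable measurableSet_Ico
    refine MeasureTheory.Integrable.mono' ?_ hmeas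
      ((ae_restrict_iff' measurableSet_Ico).mpr (ae_of_all _ hhbound))
    exact integrableOn_const measure_Ico_lt_top.ne
  have hhII : ∀ a b, a ∈ Icc (0:ℝ) T → b ∈ Icc (0:ℝ) T → IntervalIntegrable h volume a b := by
    intro a b ha hb
    exact (hhint.mono (uIcc_subset_Icc ha hb) le_rfl).intervalIntegrable
  have hIntTend : ∀ t ∈ Ico (0:ℝ) T, Tendsto (fun s => ∫ r in t..s, h r)
      (𝓝[Ico (0:ℝ) T] T) (𝓝 (∫ r in t..T, h r)) := by
    intro t ht
    have hcont := intervalIntegral.continuousOn_primitive_interval'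
      (hhII t T ⟨ht.1, ht.2.le⟩ ⟨hT.le, le_rfl⟩) left_mem_uIcc
    have hle : 𝓝[Ico (0:ℝ) T] T ≤ 𝓝[uIcc t T] T := by
      rw [hFeq t ht.1 ht.2, uIcc_of_le ht.2.le]
      exact nhdsWithin_mono _ Ioo_subset_Icc_self
    exact ((hcont T right_mem_uIcc).tendsto).mono_left hle
  have hI0 : Tendsto (fun t => ∫ r in t..T, h r) (𝓝[Ico (0:ℝ) T] T) (𝓝 0) := by
    have h1 : IntegrableOn h (uIcc (0:ℝ) T) volume := by rwa [uIcc_of_le hT.le]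
    have hcont := intervalIntegral.continuousOn_primitive_interval_left h1
    have hTmem : T ∈ uIcc (0:ℝ) T := right_mem_uIcc
    have h2 := ((hcont T hTmem).tendsto).mono_left
      (by rw [uIcc_of_le hT.le]; exact hFleIcc :
        𝓝[Ico (0:ℝ) T] T ≤ 𝓝[uIcc (0:ℝ) T] T)
    simpa using h2
  -- assembly
  refine ⟨L1, hL1, fun t => P t - L1 * phi2 f g 0 T - ∫ r in t..T, h r, ?_, ?_, ?_, ?_⟩
  · -- tendsto of phi3
    intro t ht
    have h1 : Tendsto (fun s => P t - P s - ∫ r in t..s, h r) (𝓝[Ico (0:ℝ) T] T)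
        (𝓝 (P t - L1 * phi2 f g 0 T - ∫ r in t..T, h r)) :=
      (tendsto_const_nhds.sub hPtend).sub (hIntTend t ht)
    apply h1.congr'
    have hev : ∀ᶠ s in 𝓝[Ico (0:ℝ) T] T, s ∈ Ioo t T := by
      rw [hFeq t ht.1 ht.2]; exact eventually_mem_nhdsWithin
    filter_upwards [hev] with s hs
    exact (hid t ht s ⟨ht.1.trans hs.1.le, hs.2⟩ hs.1.le).symm
  · -- representation
    intro t ht
    rw [hP t]
  · -- boundedness
    refine ⟨MP + |L1 * phi2 f g 0 T| + Mg * MP * T, ?_⟩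
    intro t ht
    have hb1 : |P t| ≤ MP := by rw [abs_of_pos (hPpos t)]; exact hPle t ht
    have hb3 : |∫ r in t..T, h r| ≤ Mg * MP * T := by
      have hae : ∀ᵐ x ∂volume.restrict (Set.uIoc t T), ‖h x‖ ≤ Mg * MP := by
        rw [uIoc_of_le ht.2.le]
        filter_upwards [ae_restrict_mem measurableSet_Ioc,
          ae_restrict_of_ae (compl_mem_ae_iff.mpr (measure_singleton T))] with x hx hxT
        have hxT' : x ≠ T := by simpa using hxT
        exact hhbound x ⟨ht.1.trans hx.1.le, lt_of_le_of_ne hx.2 hxT'⟩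
      have h2 := intervalIntegral.norm_integral_le_abs_of_norm_le hae
        (_root_.intervalIntegrable_const (c := Mg * MP))
      rw [Real.norm_eq_abs] at h2
      rw [intervalIntegral.integral_const, smul_eq_mul] at h2
      have h3 : |(T - t) * (Mg * MP)| = (T - t) * (Mg * MP) := by
        apply abs_of_nonneg
        have := ht.2.le
        have : (0:ℝ) ≤ T - t := by linarith
        positivity
      rw [h3] at h2
      have h4 : (T - t) * (Mg * MP) ≤ Mg * MP * T := by
        have h5 : (0:ℝ) ≤ Mg * MP := by positivity
        nlinarith [ht.1, ht.2.le]
      linarith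
    have := abs_sub (P t - L1 * phi2 f g 0 T) (∫ r in t..T, h r)
    have h6 := abs_sub (P t) (L1 * phi2 f g 0 T)
    calc |P t - L1 * phi2 f g 0 T - ∫ r in t..T, h r|
        ≤ |P t - L1 * phi2 f g 0 T| + |∫ r in t..T, h r| := abs_sub _ _
      _ ≤ |P t| + |L1 * phi2 f g 0 T| + |∫ r in t..T, h r| := by linarith [abs_sub (P t) (L1 * phi2 f g 0 T)]
      _ ≤ MP + |L1 * phi2 f g 0 T| + Mg * MP * T := by linarith
  · -- tendsto to 0
    have h1 := (hPtend.sub (tendsto_const_nhds (x := L1 * phi2 f g 0 T))).sub hI0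
    simpa using h1
end
end

section
/- For every admissible trading intensity β and every t ∈ [0,T), the following integration-by-parts identity holds: ∫_0^t ( l_r² + (σᵛ_r)² ) φ₁(0,r)² φ₃(T,r) dr = φ₃(T,t) S_t φ₁(0,t)² − φ₃(T,0) s₀ + ∫_0^t φ₁(0,r) φ₂(0,r) l_r² dr. -/
open MeasureTheory Filter Set intervalIntegral

noncomputable section

/-- the integration-by-parts identity
`∫_0^t (l² + (σᵛ)²) φ₁(0,·)² φ₃(T,·) = φ₃(T,t) S_t φ₁(0,t)² − φ₃(T,0) s₀
  + ∫_0^t φ₁(0,·) φ₂(0,·) l²`, where `φ₃(T,t) = lim_{s→T⁻} φ₃(s,t)`. -/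
theorem integration_by_parts_phi3
    (T s₀ c : ℝ) (hT : 0 < T) (hs₀ : 0 < s₀) (hc : 0 < c)
    (f g σv σz : ℝ → ℝ)
    (hf : ContinuousOn f (Set.Icc 0 T)) (hg : ContinuousOn g (Set.Icc 0 T))
    (hσv : ContinuousOn σv (Set.Icc 0 T)) (hσz : ContinuousOn σz (Set.Icc 0 T))
    (hσvc : ∀ t ∈ Set.Icc 0 T, c ≤ σv t) (hσzc : ∀ t ∈ Set.Icc 0 T, c ≤ σz t)
    (β : ℝ → ℝ) (hβ : Admissible T β)
    (S : ℝ → ℝ) (hS : RiccatiSol T s₀ f σv σz β S)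
    (hSpos : ∀ t ∈ Set.Ico 0 T, 0 < S t)
    (L3 : ℝ → ℝ)
    (hL3 : ∀ t ∈ Set.Ico 0 T,
      Filter.Tendsto (fun s => phi3 f g σz β S s t)
        (nhdsWithin T (Set.Ico 0 T)) (nhds (L3 t))) :
    ∀ t ∈ Set.Ico 0 T,
      (∫ r in (0 : ℝ)..t,
          ((β r * S r / σz r) ^ 2 + (σv r) ^ 2) * (phi1 f σz β S 0 r) ^ 2 * L3 r)
        = L3 t * S t * (phi1 f σz β S 0 t) ^ 2 - L3 0 * s₀
          + ∫ r in (0 : ℝ)..t,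
              phi1 f σz β S 0 r * phi2 f g 0 r * (β r * S r / σz r) ^ 2 := by
  obtain ⟨hβc, hβpos, -⟩ := hβ
  obtain ⟨hS0, hSd⟩ := hS
  have hIsub : Set.Ico (0:ℝ) T ⊆ Set.Icc 0 T := Set.Ico_subset_Icc_self
  have hσzne : ∀ r ∈ Set.Ico (0:ℝ) T, σz r ≠ 0 := fun r hr =>
    ne_of_gt (lt_of_lt_of_le hc (hσzc r (hIsub hr)))
  have hSc : ContinuousOn S (Set.Ico 0 T) := fun r hr => (hSd r hr).continuousWithinAt
  set k : ℝ → ℝ := fun u => (β u) ^ 2 * S u / (σz u) ^ 2 with hkdef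
  have hkc : ContinuousOn k (Set.Ico 0 T) :=
    ((hβc.pow 2).mul hSc).div ((hσz.mono hIsub).pow 2)
      (fun r hr => pow_ne_zero 2 (hσzne r hr))
  have hhc : ContinuousOn (fun u => f u - k u) (Set.Ico 0 T) := (hf.mono hIsub).sub hkc
  set G : ℝ → ℝ := fun u => phi1 f σz β S u 0 * phi2 f g 0 u * k u with hGdef
  have hIccsub : ∀ b ∈ Set.Ico (0:ℝ) T, Set.Icc (0:ℝ) b ⊆ Set.Ico 0 T := fun b hb x hx =>
    ⟨hx.1, lt_of_le_of_lt hx.2 hb.2⟩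
  have hIh_cont : ∀ b ∈ Set.Ico (0:ℝ) T,
      ContinuousOn (fun r => ∫ u in (0:ℝ)..r, (f u - k u)) (Set.Icc 0 b) := by
    intro b hb
    have hint : IntegrableOn (fun u => f u - k u) (Set.uIcc (0:ℝ) b) volume := by
      rw [Set.uIcc_of_le hb.1]
      exact (hhc.mono (hIccsub b hb)).integrableOn_Icc
    have := intervalIntegral.continuousOn_primitive_interval
      (f := fun u => f u - k u) (μ := volume) (a := (0:ℝ)) (b := b) hint
    rwa [Set.uIcc_of_le hb.1] at this
  have hJ_cont : ∀ b ∈ Set.Ico (0:ℝ) T,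
      ContinuousOn (fun r => ∫ u in (0:ℝ)..r, (f u + g u)) (Set.Icc 0 b) := by
    intro b hb
    have hint : IntegrableOn (fun u => f u + g u) (Set.uIcc (0:ℝ) b) volume := by
      rw [Set.uIcc_of_le hb.1]
      exact (((hf.mono hIsub).add (hg.mono hIsub)).mono (hIccsub b hb)).integrableOn_Icc
    have := intervalIntegral.continuousOn_primitive_interval
      (f := fun u => f u + g u) (μ := volume) (a := (0:ℝ)) (b := b) hint
    rwa [Set.uIcc_of_le hb.1] at this
  have hphi1r : ∀ r : ℝ, phi1 f σz β S 0 r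
      = Real.exp (-(∫ u in (0:ℝ)..r, (f u - k u))) := by
    intro r
    simp only [phi1, hkdef]
    rw [intervalIntegral.integral_symm]
  have hphi1f : ∀ r : ℝ, phi1 f σz β S r 0
      = Real.exp (∫ u in (0:ℝ)..r, (f u - k u)) := by
    intro r; simp only [phi1, hkdef]
  have hphi2r : ∀ r : ℝ, phi2 f g 0 r
      = Real.exp (-(∫ u in (0:ℝ)..r, (f u + g u))) := by
    intro r
    simp only [phi2]
    rw [intervalIntegral.integral_symm]
  have hGc : ∀ b ∈ Set.Ico (0:ℝ) T, ContinuousOn G (Set.Icc 0 b) := by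
    intro b hb
    have h1 : ContinuousOn (fun r => phi1 f σz β S r 0) (Set.Icc 0 b) := by
      simp only [hphi1f]
      exact Real.continuous_exp.comp_continuousOn (hIh_cont b hb)
    have h2 : ContinuousOn (fun r => phi2 f g 0 r) (Set.Icc 0 b) := by
      simp only [hphi2r]
      exact Real.continuous_exp.comp_continuousOn (hJ_cont b hb).neg
    exact (h1.mul h2).mul (hkc.mono (hIccsub b hb))
  have hNeBot : (nhdsWithin T (Set.Ico 0 T)).NeBot := by
    rw [← mem_closure_iff_nhdsWithin_neBot, closure_Ico hT.ne]
    exact ⟨le_of_lt hT, le_refl T⟩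
  have hGint : ∀ r ∈ Set.Ico (0:ℝ) T, ∀ s ∈ Set.Ico (0:ℝ) T,
      IntervalIntegrable G volume r s := by
    intro r hr s hs
    have hm : max r s ∈ Set.Ico (0:ℝ) T := by
      rcases max_cases r s with ⟨h, _⟩ | ⟨h, _⟩ <;> rw [h] <;> assumption
    have hsub : Set.uIcc r s ⊆ Set.Icc 0 (max r s) :=
      Set.uIcc_subset_Icc ⟨hr.1, le_max_left r s⟩ ⟨hs.1, le_max_right r s⟩
    exact ((hGc (max r s) hm).mono hsub).intervalIntegrable
  have hL3eq : ∀ r ∈ Set.Ico (0:ℝ) T, L3 r = L3 0 - ∫ u in (0:ℝ)..r, G u := by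
    intro r hr
    have h0 : (0:ℝ) ∈ Set.Ico (0:ℝ) T := ⟨le_refl 0, hT⟩
    have key : ∀ s ∈ Set.Ico (0:ℝ) T,
        phi3 f g σz β S s 0 = (∫ u in (0:ℝ)..r, G u) + phi3 f g σz β S s r := by
      intro s hs
      show (∫ u in (0:ℝ)..s, G u) = (∫ u in (0:ℝ)..r, G u) + ∫ u in r..s, G u
      exact (intervalIntegral.integral_add_adjacent_intervals
        (hGint 0 h0 r hr) (hGint r hr s hs)).symm
    have h1 : Filter.Tendsto (fun s => phi3 f g σz β S s 0)
        (nhdsWithin T (Set.Ico 0 T)) (nhds ((∫ u in (0:ℝ)..r, G u) + L3 r)) := by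
      have h2 : Filter.Tendsto (fun s => (∫ u in (0:ℝ)..r, G u) + phi3 f g σz β S s r)
          (nhdsWithin T (Set.Ico 0 T)) (nhds ((∫ u in (0:ℝ)..r, G u) + L3 r)) :=
        (hL3 r hr).const_add _
      refine h2.congr' ?_
      filter_upwards [self_mem_nhdsWithin] with s hs
      exact (key s hs).symm
    have := tendsto_nhds_unique h1 (hL3 0 h0)
    linarith
  -- now fix t
  intro t ht
  obtain ⟨ht0, htT⟩ := ht
  have htIco : t ∈ Set.Ico (0:ℝ) T := ⟨ht0, htT⟩
  have htI : Set.Icc (0:ℝ) t ⊆ Set.Ico 0 T := hIccsub t htIco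
  set Ih : ℝ → ℝ := fun r => ∫ u in (0:ℝ)..r, (f u - k u) with hIhdef
  set E : ℝ → ℝ := fun r => Real.exp (-(Ih r)) with hEdef
  set F : ℝ → ℝ := fun r => ∫ u in (0:ℝ)..r, G u with hFdef
  set A : ℝ → ℝ := fun r => S r * (E r) ^ 2 with hAdef
  set H : ℝ → ℝ := fun r => (L3 0 - F r) * A r with hHdef
  set W : ℝ → ℝ := fun r =>
    ((β r * S r / σz r) ^ 2 + (σv r) ^ 2) * (E r) ^ 2 * (L3 0 - F r)
      - E r * phi2 f g 0 r * (β r * S r / σz r) ^ 2 with hWdef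
  -- continuity of the pieces on Icc 0 t
  have hE_cont : ContinuousOn E (Set.Icc 0 t) :=
    Real.continuous_exp.comp_continuousOn (hIh_cont t htIco).neg
  have hF_cont : ContinuousOn F (Set.Icc 0 t) := by
    have hint : IntegrableOn G (Set.uIcc (0:ℝ) t) volume := by
      rw [Set.uIcc_of_le ht0]; exact (hGc t htIco).integrableOn_Icc
    have := intervalIntegral.continuousOn_primitive_interval
      (f := G) (μ := volume) (a := (0:ℝ)) (b := t) hint
    rwa [Set.uIcc_of_le ht0] at this
  have hP2_cont : ContinuousOn (fun r => phi2 f g 0 r) (Set.Icc 0 t) := by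
    simp only [hphi2r]
    exact Real.continuous_exp.comp_continuousOn (hJ_cont t htIco).neg
  have hl_cont : ContinuousOn (fun r => β r * S r / σz r) (Set.Icc 0 t) :=
    ((hβc.mono htI).mul (hSc.mono htI)).div ((hσz.mono hIsub).mono htI)
      (fun r hr => hσzne r (htI hr))
  have hA_cont : ContinuousOn A (Set.Icc 0 t) := (hSc.mono htI).mul (hE_cont.pow 2)
  have hH_cont : ContinuousOn H (Set.Icc 0 t) :=
    (continuousOn_const.sub hF_cont).mul hA_cont
  have hW_cont : ContinuousOn W (Set.Icc 0 t) := by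
    refine ContinuousOn.sub ?_ ?_
    · exact (((hl_cont.pow 2).add (((hσv.mono hIsub).mono htI).pow 2)).mul
        (hE_cont.pow 2)).mul (continuousOn_const.sub hF_cont)
    · exact (hE_cont.mul hP2_cont).mul (hl_cont.pow 2)
  have hcorr_cont : ContinuousOn
      (fun r => E r * phi2 f g 0 r * (β r * S r / σz r) ^ 2) (Set.Icc 0 t) :=
    (hE_cont.mul hP2_cont).mul (hl_cont.pow 2)
  -- derivative of H at interior points
  have hderiv : ∀ x ∈ Set.Ioo (0:ℝ) t, HasDerivAt H (W x) x := by
    intro x hx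
    have hxI : x ∈ Set.Ico (0:ℝ) T := ⟨le_of_lt hx.1, lt_trans hx.2 htT⟩
    have hxIcc : x ∈ Set.Icc (0:ℝ) t := ⟨le_of_lt hx.1, le_of_lt hx.2⟩
    have hopen : IsOpen (Set.Ioo (0:ℝ) t) := isOpen_Ioo
    have hnhds : Set.Icc (0:ℝ) t ∈ nhds x :=
      Filter.mem_of_superset (hopen.mem_nhds hx) Set.Ioo_subset_Icc_self
    have hnhdsI : Set.Ico (0:ℝ) T ∈ nhds x := Filter.mem_of_superset hnhds htI
    have hd_Ih : HasDerivAt Ih (f x - k x) x := by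
      refine intervalIntegral.integral_hasDerivAt_right ?_ ?_ ?_
      · exact ((hhc.mono htI).mono
          (Set.uIcc_subset_Icc ⟨le_refl 0, ht0⟩ hxIcc)).intervalIntegrable
      · exact ContinuousOn.stronglyMeasurableAtFilter hopen
          ((hhc.mono htI).mono Set.Ioo_subset_Icc_self) x hx
      · exact ((hhc.mono htI) x hxIcc).continuousAt hnhds
    have hd_E : HasDerivAt E (Real.exp (-(Ih x)) * (-(f x - k x))) x := hd_Ih.neg.exp
    have hd_S : HasDerivAt S ((σv x) ^ 2 + 2 * f x * S x - (β x * S x / σz x) ^ 2) x :=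
      (hSd x hxI).hasDerivAt hnhdsI
    have hd_F : HasDerivAt F (G x) x := by
      refine intervalIntegral.integral_hasDerivAt_right ?_ ?_ ?_
      · exact hGint 0 ⟨le_refl 0, hT⟩ x hxI
      · exact ContinuousOn.stronglyMeasurableAtFilter hopen
          ((hGc t htIco).mono Set.Ioo_subset_Icc_self) x hx
      · exact ((hGc t htIco) x hxIcc).continuousAt hnhds
    have hd_A : HasDerivAt A
        (((σv x) ^ 2 + 2 * f x * S x - (β x * S x / σz x) ^ 2) * (E x) ^ 2
          + S x * ((2 : ℕ) * (E x) ^ 1 * (Real.exp (-(Ih x)) * (-(f x - k x))))) x :=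
      hd_S.mul (hd_E.pow 2)
    have hd_H : HasDerivAt H
        ((0 - G x) * A x + (L3 0 - F x) *
          (((σv x) ^ 2 + 2 * f x * S x - (β x * S x / σz x) ^ 2) * (E x) ^ 2
            + S x * ((2 : ℕ) * (E x) ^ 1 * (Real.exp (-(Ih x)) * (-(f x - k x)))))) x :=
      ((hasDerivAt_const x (L3 0)).sub hd_F).mul hd_A
    have heq : (0 - G x) * A x + (L3 0 - F x) *
        (((σv x) ^ 2 + 2 * f x * S x - (β x * S x / σz x) ^ 2) * (E x) ^ 2
          + S x * ((2 : ℕ) * (E x) ^ 1 * (Real.exp (-(Ih x)) * (-(f x - k x))))) = W x := by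
      have hz : σz x ≠ 0 := hσzne x hxI
      have hkS : k x * S x = (β x * S x / σz x) ^ 2 := by
        simp only [hkdef]
        field_simp
      have hmul : Real.exp (Ih x) * Real.exp (-(Ih x)) = 1 := by
        rw [← Real.exp_add]; simp
      simp only [hWdef, hGdef, hAdef, hphi1f, hEdef]
      rw [← hkS,
        show Real.exp (∫ u in (0:ℝ)..x, f u - k u) = Real.exp (Ih x) from rfl]
      push_cast
      linear_combination (-(phi2 f g 0 x) * (k x * S x) * Real.exp (-Ih x)) * hmul
    exact heq ▸ hd_H
  -- the integration by parts
  have hWint : IntervalIntegrable W volume 0 t := by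
    apply ContinuousOn.intervalIntegrable
    rwa [Set.uIcc_of_le ht0]
  have hIBP : ∫ r in (0:ℝ)..t, W r = H t - H 0 :=
    intervalIntegral.integral_eq_sub_of_hasDeriv_right_of_le ht0 hH_cont
      (fun x hx => (hderiv x hx).hasDerivWithinAt) hWint
  have hcorrint : IntervalIntegrable
      (fun r => E r * phi2 f g 0 r * (β r * S r / σz r) ^ 2) volume 0 t := by
    apply ContinuousOn.intervalIntegrable
    rwa [Set.uIcc_of_le ht0]
  -- rewrite the left-hand integrand
  have hEqOn : Set.EqOn
      (fun r => ((β r * S r / σz r) ^ 2 + (σv r) ^ 2) * (phi1 f σz β S 0 r) ^ 2 * L3 r)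
      (fun r => W r + E r * phi2 f g 0 r * (β r * S r / σz r) ^ 2)
      (Set.uIcc 0 t) := by
    intro r hr
    rw [Set.uIcc_of_le ht0] at hr
    have hrI : r ∈ Set.Ico (0:ℝ) T := htI hr
    simp only [hWdef, hphi1r r, hL3eq r hrI]
    rw [show (∫ u in (0:ℝ)..r, G u) = F r from rfl,
      show Real.exp (-(∫ u in (0:ℝ)..r, f u - k u)) = E r from rfl]
    ring
  rw [intervalIntegral.integral_congr hEqOn,
    intervalIntegral.integral_add hWint hcorrint, hIBP]
  have hcorr_eq : (fun r => phi1 f σz β S 0 r * phi2 f g 0 r * (β r * S r / σz r) ^ 2)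
      = fun r => E r * phi2 f g 0 r * (β r * S r / σz r) ^ 2 := by
    funext r
    rw [hphi1r r]
  rw [hcorr_eq, hphi1r t, hL3eq t htIco]
  have hF0 : F 0 = 0 := intervalIntegral.integral_same
  have hE0 : E 0 = 1 := by
    simp only [hEdef, hIhdef, intervalIntegral.integral_same, neg_zero, Real.exp_zero]
  have hHt : H t = (L3 0 - F t) * (S t * (E t) ^ 2) := rfl
  have hH0 : H 0 = (L3 0 - F 0) * (S 0 * (E 0) ^ 2) := rfl
  rw [hHt, hH0, hF0, hE0, hS0,
    show Real.exp (-(∫ u in (0:ℝ)..t, f u - k u)) = E t from rfl,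
    show (∫ u in (0:ℝ)..t, G u) = F t from rfl]
  ring
end
end

section
/- For every admissible trading intensity β and every t ∈ [0,T): ∫_0^t β_r S_r φ₁(0,r) dr ≤ C · exp( ∫_0^t β_u² S_u / (σᶻ_u)² du ), where C := e^{T·sup_{u∈[0,T]}|f_u|} · (sup_{u∈[0,T]} σᶻ_u)² / β̲. -/
open MeasureTheory Filter Set intervalIntegral

noncomputable section

/-- If `β` is continuous and positive on `[0,T)` and eventually `≥ ε > 0` near `T⁻`,
then its infimum over `[0,T)` is positive. -/
lemma aux_inf_pos (T : ℝ) (hT : 0 < T) (β : ℝ → ℝ)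
    (hcont : ContinuousOn β (Set.Ico 0 T))
    (hpos : ∀ t ∈ Set.Ico 0 T, 0 < β t)
    (ε : ℝ) (hε : 0 < ε)
    (hev : ∀ᶠ x in nhdsWithin T (Set.Ico 0 T), ε ≤ β x) :
    0 < sInf (β '' Set.Ico 0 T) := by
  rw [eventually_nhdsWithin_iff, Metric.eventually_nhds_iff] at hev
  obtain ⟨δ, hδ, hball⟩ := hev
  set a := max 0 (T - δ/2) with ha
  have haT : a < T := by
    rw [ha]; apply max_lt hT; linarith
  have h0a : (0:ℝ) ≤ a := le_max_left _ _
  have hsub : Set.Icc 0 a ⊆ Set.Ico 0 T := fun x hx => ⟨hx.1, lt_of_le_of_lt hx.2 haT⟩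
  obtain ⟨x₀, hx₀, hmin⟩ := isCompact_Icc.exists_isMinOn (Set.nonempty_Icc.2 h0a)
    (hcont.mono hsub)
  have hmpos : 0 < β x₀ := hpos x₀ (hsub hx₀)
  have key : ∀ x ∈ Set.Ico 0 T, min (β x₀) ε ≤ β x := by
    intro x hx
    rcases le_or_gt x a with h | h
    · exact le_trans (min_le_left _ _) (hmin ⟨hx.1, h⟩)
    · refine le_trans (min_le_right _ _) (hball ?_ hx)
      have h2 : T - δ/2 ≤ a := le_max_right _ _
      rw [Real.dist_eq, abs_of_nonpos (by linarith [hx.2])]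
      linarith [hx.2]
  have hminpos : 0 < min (β x₀) ε := lt_min hmpos hε
  refine lt_of_lt_of_le hminpos (le_csInf ?_ ?_)
  · exact ((Set.nonempty_Ico.2 hT).image β)
  · rintro y ⟨x, hx, rfl⟩; exact key x hx

/-- the estimate
`∫_0^t β_r S_r φ₁(0,r) dr ≤ C exp(∫_0^t β_u² S_u/(σᶻ_u)² du)` with
`C = e^{T sup|f|} (sup σᶻ)² / β̲`. -/
theorem integral_beta_S_phi1_estimate
    (T s₀ c : ℝ) (hT : 0 < T) (hs₀ : 0 < s₀) (hc : 0 < c)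
    (f g σv σz : ℝ → ℝ)
    (hf : ContinuousOn f (Set.Icc 0 T)) (hg : ContinuousOn g (Set.Icc 0 T))
    (hσv : ContinuousOn σv (Set.Icc 0 T)) (hσz : ContinuousOn σz (Set.Icc 0 T))
    (hσvc : ∀ t ∈ Set.Icc 0 T, c ≤ σv t) (hσzc : ∀ t ∈ Set.Icc 0 T, c ≤ σz t)
    (β : ℝ → ℝ) (hβ : Admissible T β)
    (S : ℝ → ℝ) (hS : RiccatiSol T s₀ f σv σz β S)
    (hSpos : ∀ t ∈ Set.Ico 0 T, 0 < S t) :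
    ∀ t ∈ Set.Ico 0 T,
      (∫ r in (0 : ℝ)..t, β r * S r * phi1 f σz β S 0 r)
        ≤ Real.exp (T * sSup ((fun u => |f u|) '' Set.Icc 0 T))
            * (sSup (σz '' Set.Icc 0 T)) ^ 2 / sInf (β '' Set.Ico 0 T)
          * Real.exp (∫ u in (0 : ℝ)..t, (β u) ^ 2 * S u / (σz u) ^ 2) := by
  intro t ht
  obtain ⟨hβc, hβpos, hβlim⟩ := hβ
  obtain ⟨hS0, hSderiv⟩ := hS
  set k : ℝ → ℝ := fun u => (β u) ^ 2 * S u / (σz u) ^ 2 with hk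
  set M := sSup ((fun u => |f u|) '' Set.Icc 0 T) with hMdef
  set Z := sSup (σz '' Set.Icc 0 T) with hZdef
  set b := sInf (β '' Set.Ico 0 T) with hbdef
  have ht0 : (0:ℝ) ≤ t := ht.1
  have htT : t < T := ht.2
  -- positivity of inf of β
  have hbpos : 0 < b := by
    rcases hβlim with ⟨l, hl, htend⟩ | htend
    · refine aux_inf_pos T hT β hβc hβpos (l/2) (by linarith) ?_
      have : ∀ᶠ x in nhdsWithin T (Set.Ico 0 T), β x ∈ Set.Ioi (l/2) :=
        htend (Ioi_mem_nhds (by linarith))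
      exact this.mono fun x hx => le_of_lt hx
    · exact aux_inf_pos T hT β hβc hβpos 1 one_pos (htend (eventually_ge_atTop 1))
  -- basic facts
  have hIcc_sub : Set.Icc 0 t ⊆ Set.Ico 0 T := fun x hx => ⟨hx.1, lt_of_le_of_lt hx.2 htT⟩
  have hIccT : Set.Icc 0 t ⊆ Set.Icc 0 T := fun x hx => ⟨hx.1, hx.2.trans htT.le⟩
  have hScont : ContinuousOn S (Set.Ico 0 T) := fun x hx => (hSderiv x hx).continuousWithinAt
  have hσzne : ∀ x ∈ Set.Ico 0 T, (σz x) ^ 2 ≠ 0 := fun x hx =>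
    ne_of_gt (pow_pos (lt_of_lt_of_le hc (hσzc x (Set.Ico_subset_Icc_self hx))) 2)
  have hkcont : ContinuousOn k (Set.Ico 0 T) := by
    exact ((hβc.pow 2).mul hScont).div ((hσz.mono Set.Ico_subset_Icc_self).pow 2) hσzne
  have hkc : ContinuousOn k (Set.Icc 0 t) := hkcont.mono hIcc_sub
  have hfc : ContinuousOn f (Set.Icc 0 t) := hf.mono hIccT
  have huIcc : Set.uIcc (0:ℝ) t = Set.Icc 0 t := Set.uIcc_of_le ht0
  have hsubIcc : ∀ r ∈ Set.Icc (0:ℝ) t, Set.uIcc (0:ℝ) r ⊆ Set.Icc 0 t := by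
    intro r hr
    rw [Set.uIcc_of_le hr.1]
    exact Set.Icc_subset_Icc le_rfl hr.2
  have hkint : ∀ r ∈ Set.Icc (0:ℝ) t, IntervalIntegrable k volume 0 r :=
    fun r hr => (hkc.mono (hsubIcc r hr)).intervalIntegrable
  have hfint : ∀ r ∈ Set.Icc (0:ℝ) t, IntervalIntegrable f volume 0 r :=
    fun r hr => (hfc.mono (hsubIcc r hr)).intervalIntegrable
  -- K = primitive of k
  set K : ℝ → ℝ := fun r => ∫ u in (0:ℝ)..r, k u with hKdef
  have hKc : ContinuousOn K (Set.Icc 0 t) := by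
    have := intervalIntegral.continuousOn_primitive_interval
      (f := k) (a := (0:ℝ)) (b := t) (μ := volume)
      (by rw [huIcc]; exact hkc.integrableOn_compact isCompact_Icc)
    rwa [huIcc] at this
  -- sup bounds
  have hMb : ∀ u ∈ Set.Icc (0:ℝ) T, |f u| ≤ M := fun u hu =>
    le_csSup (isCompact_Icc.image_of_continuousOn hf.abs).bddAbove ⟨u, hu, rfl⟩
  have hM0 : 0 ≤ M := le_trans (abs_nonneg (f 0)) (hMb 0 ⟨le_rfl, hT.le⟩)
  have hZb : ∀ u ∈ Set.Icc (0:ℝ) T, σz u ≤ Z := fun u hu =>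
    le_csSup (isCompact_Icc.image_of_continuousOn hσz).bddAbove ⟨u, hu, rfl⟩
  have hbl : ∀ u ∈ Set.Ico (0:ℝ) T, b ≤ β u := fun u hu =>
    csInf_le ⟨0, by rintro y ⟨x, hx, rfl⟩; exact (hβpos x hx).le⟩ ⟨u, hu, rfl⟩
  -- pointwise bound
  have hpt : ∀ r ∈ Set.Icc (0:ℝ) t,
      β r * S r * phi1 f σz β S 0 r
        ≤ Real.exp (T * M) * Z ^ 2 / b * (Real.exp (K r) * k r) := by
    intro r hr
    have hrT : r ∈ Set.Ico 0 T := hIcc_sub hr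
    have hσzr : 0 < σz r := lt_of_lt_of_le hc (hσzc r (Set.Ico_subset_Icc_self hrT))
    have hβr : 0 < β r := hβpos r hrT
    have hSr : 0 < S r := hSpos r hrT
    have hkr : 0 ≤ k r := by
      rw [hk]
      positivity
    -- rewrite phi1
    have hphi : phi1 f σz β S 0 r
        = Real.exp (-(∫ u in (0:ℝ)..r, f u)) * Real.exp (K r) := by
      rw [phi1, ← Real.exp_add]
      congr 1
      rw [intervalIntegral.integral_symm,
        intervalIntegral.integral_sub (hfint r hr) (hkint r hr)]
      ring
    -- bound on exp(-∫ f)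
    have h1 : -(∫ u in (0:ℝ)..r, f u) ≤ T * M := by
      have habs : ‖∫ u in (0:ℝ)..r, f u‖ ≤ M * |r - 0| := by
        apply intervalIntegral.norm_integral_le_of_norm_le_const
        intro x hx
        rw [Set.uIoc_of_le hr.1] at hx
        rw [Real.norm_eq_abs]
        exact hMb x ⟨hx.1.le, (hx.2.trans hr.2).trans htT.le⟩
      rw [Real.norm_eq_abs, sub_zero, abs_of_nonneg hr.1] at habs
      calc -(∫ u in (0:ℝ)..r, f u) ≤ |∫ u in (0:ℝ)..r, f u| := neg_le_abs _
        _ ≤ M * r := habs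
        _ ≤ M * T := mul_le_mul_of_nonneg_left (hr.2.trans htT.le) hM0
        _ = T * M := mul_comm _ _
    -- bound on β S
    have h2 : β r * S r ≤ Z ^ 2 / b * k r := by
      have heq : β r * S r = (σz r) ^ 2 / β r * k r := by
        rw [hk]
        field_simp
      rw [heq]
      apply mul_le_mul_of_nonneg_right _ hkr
      exact div_le_div₀ (by positivity)
        (pow_le_pow_left₀ hσzr.le (hZb r ⟨hr.1, hr.2.trans htT.le⟩) 2) hbpos (hbl r hrT)
    calc β r * S r * phi1 f σz β S 0 r
        = (β r * S r) * Real.exp (-(∫ u in (0:ℝ)..r, f u)) * Real.exp (K r) := by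
          rw [hphi]; ring
      _ ≤ (Z ^ 2 / b * k r) * Real.exp (T * M) * Real.exp (K r) := by
          apply mul_le_mul_of_nonneg_right _ (Real.exp_nonneg _)
          exact mul_le_mul h2 (Real.exp_le_exp.2 h1) (Real.exp_nonneg _)
            (mul_nonneg (by positivity) hkr)
      _ = Real.exp (T * M) * Z ^ 2 / b * (Real.exp (K r) * k r) := by ring
  -- continuity of r ↦ phi1 0 r
  have hphic : ContinuousOn (fun r => phi1 f σz β S 0 r) (Set.Icc 0 t) := by
    have hintfk : IntegrableOn (fun u => f u - (β u) ^ 2 * S u / (σz u) ^ 2)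
        (Set.uIcc t 0) volume := by
      rw [Set.uIcc_comm, huIcc]
      exact (hfc.sub hkc).integrableOn_compact isCompact_Icc
    have hcp := intervalIntegral.continuousOn_primitive_interval_left
      (f := fun u => f u - (β u) ^ 2 * S u / (σz u) ^ 2) (a := t) (b := (0:ℝ))
      (μ := volume) hintfk
    rw [Set.uIcc_comm, huIcc] at hcp
    exact Real.continuous_exp.comp_continuousOn hcp
  -- integrability of both integrands on [0, t]
  have hint1 : IntervalIntegrable (fun r => β r * S r * phi1 f σz β S 0 r) volume 0 t := by
    apply ContinuousOn.intervalIntegrable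
    rw [huIcc]
    exact ((hβc.mono hIcc_sub).mul (hScont.mono hIcc_sub)).mul hphic
  have hint2 : IntervalIntegrable
      (fun r => Real.exp (T * M) * Z ^ 2 / b * (Real.exp (K r) * k r)) volume 0 t := by
    apply ContinuousOn.intervalIntegrable
    rw [huIcc]
    exact continuousOn_const.mul ((Real.continuous_exp.comp_continuousOn hKc).mul hkc)
  have hmono := intervalIntegral.integral_mono_on ht0 hint1 hint2 hpt
  -- FTC for ∫ exp(K) k
  have hexpKc : ContinuousOn (fun r => Real.exp (K r)) (Set.Icc 0 t) :=
    Real.continuous_exp.comp_continuousOn hKc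
  have hderiv : ∀ r ∈ Set.Ioo (0:ℝ) t, HasDerivWithinAt (fun r => Real.exp (K r))
      (Real.exp (K r) * k r) (Set.Ioi r) r := by
    intro r hr
    have hrT' : r ∈ Set.Ioo (0:ℝ) T := ⟨hr.1, hr.2.trans htT⟩
    have hmem : Set.Ico 0 T ∈ nhds r :=
      mem_nhds_iff.2 ⟨Set.Ioo 0 T, fun x hx => ⟨hx.1.le, hx.2⟩, isOpen_Ioo, hrT'⟩
    have hca : ContinuousAt k r := hkcont.continuousAt hmem
    have hsm : StronglyMeasurableAtFilter k (nhds r) volume :=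
      (hkcont.mono (fun x hx => ⟨hx.1.le, hx.2⟩)).stronglyMeasurableAtFilter
        isOpen_Ioo r hrT'
    have hKd : HasDerivAt K (k r) r :=
      intervalIntegral.integral_hasDerivAt_right (hkint r ⟨hr.1.le, hr.2.le⟩) hsm hca
    exact hKd.exp.hasDerivWithinAt
  have hftc : (∫ r in (0:ℝ)..t, Real.exp (K r) * k r) = Real.exp (K t) - 1 := by
    have h := intervalIntegral.integral_eq_sub_of_hasDeriv_right_of_le ht0 hexpKc hderiv
      (by
        apply ContinuousOn.intervalIntegrable
        rw [huIcc]
        exact hexpKc.mul hkc)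
    rw [h]
    have hK0 : K 0 = 0 := intervalIntegral.integral_same
    rw [hK0, Real.exp_zero]
  calc (∫ r in (0:ℝ)..t, β r * S r * phi1 f σz β S 0 r)
      ≤ ∫ r in (0:ℝ)..t, Real.exp (T * M) * Z ^ 2 / b * (Real.exp (K r) * k r) := hmono
    _ = Real.exp (T * M) * Z ^ 2 / b * (Real.exp (K t) - 1) := by
        rw [intervalIntegral.integral_const_mul, hftc]
    _ ≤ Real.exp (T * M) * Z ^ 2 / b * Real.exp (K t) := by
        apply mul_le_mul_of_nonneg_left _ (by positivity)
        linarith [Real.exp_pos (K t)]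
    _ = Real.exp (T * M) * Z ^ 2 / b * Real.exp (∫ u in (0:ℝ)..t, k u) := by
        rw [hKdef]
end
end

section
/- Let β be an admissible trading intensity and S = S^β the solution of the Riccati equation, with S_t > 0 for all t ∈ [0,T). If lim_{t→T⁻} S_t = 0, then lim_{t→T⁻} β_t = +∞. -/
open MeasureTheory Filter Set intervalIntegral

noncomputable section

/-- if `S_t → 0` as `t → T⁻`, then `β_t → +∞`. -/
theorem S_to_zero_implies_beta_blows_up
    (T s₀ c : ℝ) (hT : 0 < T) (hs₀ : 0 < s₀) (hc : 0 < c)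
    (f g σv σz : ℝ → ℝ)
    (hf : ContinuousOn f (Set.Icc 0 T)) (hg : ContinuousOn g (Set.Icc 0 T))
    (hσv : ContinuousOn σv (Set.Icc 0 T)) (hσz : ContinuousOn σz (Set.Icc 0 T))
    (hσvc : ∀ t ∈ Set.Icc 0 T, c ≤ σv t) (hσzc : ∀ t ∈ Set.Icc 0 T, c ≤ σz t)
    (β : ℝ → ℝ) (hβ : Admissible T β)
    (S : ℝ → ℝ) (hS : RiccatiSol T s₀ f σv σz β S)
    (hSpos : ∀ t ∈ Set.Ico 0 T, 0 < S t)
    (hSlim : Filter.Tendsto S (nhdsWithin T (Set.Ico 0 T)) (nhds 0)) :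
    Filter.Tendsto β (nhdsWithin T (Set.Ico 0 T)) Filter.atTop := by
  rcases hβ.2.2 with ⟨l, hl, hβl⟩ | h
  · -- finite limit case: derive contradiction
    exfalso
    set L := nhdsWithin T (Set.Ico 0 T) with hL
    have hTmem : T ∈ Set.Icc 0 T := ⟨hT.le, le_refl T⟩
    have hne : L.NeBot := by
      rw [hL, ← mem_closure_iff_nhdsWithin_neBot, closure_Ico hT.ne]
      exact hTmem
    have hmono : L ≤ nhdsWithin T (Set.Icc 0 T) :=
      nhdsWithin_mono _ Set.Ico_subset_Icc_self
    have hfT : Filter.Tendsto f L (nhds (f T)) :=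
      ((hf T hTmem).tendsto).mono_left hmono
    have hσvT : Filter.Tendsto σv L (nhds (σv T)) :=
      ((hσv T hTmem).tendsto).mono_left hmono
    have hσzT : Filter.Tendsto σz L (nhds (σz T)) :=
      ((hσz T hTmem).tendsto).mono_left hmono
    have hσzTne : σz T ≠ 0 := (lt_of_lt_of_le hc (hσzc T hTmem)).ne'
    -- the derivative expression tends to σv T ^ 2
    have hderivlim : Filter.Tendsto
        (fun t => (σv t) ^ 2 + 2 * f t * S t - (β t * S t / σz t) ^ 2) L
        (nhds ((σv T) ^ 2 + 2 * f T * 0 - (l * 0 / σz T) ^ 2)) := by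
      exact ((hσvT.pow 2).add (((tendsto_const_nhds.mul hfT).mul hSlim))).sub
        ((((hβl.mul hSlim).div hσzT hσzTne)).pow 2)
    have hlimval : (σv T) ^ 2 + 2 * f T * 0 - (l * 0 / σz T) ^ 2 = (σv T) ^ 2 := by
      ring
    rw [hlimval] at hderivlim
    have hcσv : (0:ℝ) < (σv T) ^ 2 :=
      pow_pos (lt_of_lt_of_le hc (hσvc T hTmem)) 2
    have hev : ∀ᶠ t in L, 0 < (σv t) ^ 2 + 2 * f t * S t - (β t * S t / σz t) ^ 2 :=
      hderivlim.eventually (eventually_gt_nhds hcσv)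
    -- extract an interval (t₀, T) on which the derivative is positive
    rcases mem_nhdsWithin.mp hev with ⟨U, hUopen, hTU, hUsub⟩
    rcases Metric.isOpen_iff.mp hUopen T hTU with ⟨ε, hε, hball⟩
    set t₀ : ℝ := max 0 (T - ε) with ht₀def
    have ht₀lt : t₀ < T := by
      apply max_lt hT; linarith
    have ht₀0 : 0 ≤ t₀ := le_max_left _ _
    have hIoo : ∀ t ∈ Set.Ioo t₀ T,
        0 < (σv t) ^ 2 + 2 * f t * S t - (β t * S t / σz t) ^ 2 := by
      intro t ht
      apply hUsub
      constructor
      · apply hball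
        rw [Metric.mem_ball, Real.dist_eq, abs_sub_lt_iff]
        constructor
        · linarith [ht.2]
        · have : T - ε ≤ t₀ := le_max_right _ _
          linarith [ht.1]
      · exact ⟨le_trans ht₀0 ht.1.le, ht.2⟩
    -- pick t₁ in (t₀, T)
    set t₁ : ℝ := (t₀ + T) / 2 with ht₁def
    have ht₁mem : t₁ ∈ Set.Ioo t₀ T := ⟨by linarith, by linarith⟩
    have ht₁Ico : t₁ ∈ Set.Ico 0 T := ⟨le_trans ht₀0 ht₁mem.1.le, ht₁mem.2⟩
    -- S is strictly monotone on [t₁, T)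
    have hScont : ContinuousOn S (Set.Ico 0 T) := fun t ht =>
      (hS.2 t ht).continuousWithinAt
    have hsub : Set.Ico t₁ T ⊆ Set.Ico 0 T := fun x hx =>
      ⟨le_trans ht₁Ico.1 hx.1, hx.2⟩
    have hmonoS : StrictMonoOn S (Set.Ico t₁ T) := by
      apply strictMonoOn_of_deriv_pos (convex_Ico t₁ T) (hScont.mono hsub)
      intro x hx
      rw [interior_Ico] at hx
      have hxIco : x ∈ Set.Ico 0 T := ⟨le_trans ht₁Ico.1 hx.1.le, hx.2⟩
      have hxIoo : x ∈ Set.Ioo t₀ T := ⟨lt_trans ht₁mem.1 hx.1, hx.2⟩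
      have hd : HasDerivAt S
          ((σv x) ^ 2 + 2 * f x * S x - (β x * S x / σz x) ^ 2) x :=
        (hS.2 x hxIco).hasDerivAt
          (Ico_mem_nhds (lt_of_le_of_lt ht₁Ico.1 hx.1) hx.2)
      rw [hd.deriv]
      exact hIoo x hxIoo
    -- eventually S t₁ ≤ S t near T⁻, contradicting S → 0
    have hevmem : Set.Ioo t₁ T ∈ L := by
      apply mem_nhdsWithin.mpr
      exact ⟨Set.Ioi t₁, isOpen_Ioi, ht₁mem.2, fun x hx => ⟨hx.1, hx.2.2⟩⟩
    have hevle : ∀ᶠ t in L, S t₁ ≤ S t := by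
      filter_upwards [hevmem] with t ht
      exact (hmonoS ⟨le_refl t₁, ht₁mem.2⟩ ⟨ht.1.le, ht.2⟩ ht.1).le
    have : S t₁ ≤ 0 := ge_of_tendsto hSlim hevle
    exact absurd this (not_le.mpr (hSpos t₁ ht₁Ico))
  · exact h
end
end
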